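/- arXiv:1902.08165 — 7 statements merged into one kernel-verified Lean document; each statement's English description precedes it below -/
import Mathlib

section
/- General Mean Value Formula: Let Ω ⊆ ℍ be an open circular set, let f : Ω → ℍ be slice regular, and let μ be a probability measure on 𝕊 invariant under the involution J ↦ −J. Let a, b, r ∈ ℝ with b ≥ 0, r > 0, and I ∈ 𝕊 be such that Ω contains the closed Euclidean ball of radius r centered at a + bI. Then f(a+bI) = (1/2π) ∫_𝕊 ∫₀^{2π} (1 − IJ)·f(a + bJ + r(cos θ + J sin θ)) dθ dμ(J). -/
open Quaternion MeasureTheory Metric Filter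

noncomputable section

abbrev H4 := Quaternion ℝ

/-- The 2-sphere of quaternionic imaginary units. -/
def Sph : Set H4 := {q : H4 | q ^ 2 = -1}

/-- A circular subset of the quaternions. -/
def IsCircular (Ω : Set H4) : Prop :=
  ∀ (x y : ℝ), ∀ I ∈ Sph, ∀ J ∈ Sph, (x : H4) + y • I ∈ Ω → (x : H4) + y • J ∈ Ω

/-- Slice functions: functions satisfying the representation formula on Ω. -/
def IsSliceOn (Ω : Set H4) (f : H4 → H4) : Prop :=
  ∀ (x y : ℝ), ∀ I ∈ Sph, ∀ J ∈ Sph, (x : H4) + y • I ∈ Ω →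
    f ((x : H4) + y • J)
      = (1 - J * I) / 2 * f ((x : H4) + y • I) + (1 + J * I) / 2 * f ((x : H4) - y • I)

/-- Slice regular functions on a circular set: slice, real differentiable,
and satisfying the Cauchy–Riemann equation on every slice. -/
def IsSliceRegularOn (Ω : Set H4) (f : H4 → H4) : Prop :=
  IsSliceOn Ω f ∧ DifferentiableOn ℝ f Ω ∧
    ∀ (x y : ℝ), ∀ I ∈ Sph, (x : H4) + y • I ∈ Ω →
      fderiv ℝ f ((x : H4) + y • I) 1 + I * fderiv ℝ f ((x : H4) + y • I) I = 0

/-- Anti-regular slice functions. -/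
def IsAntiRegularOn (Ω : Set H4) (f : H4 → H4) : Prop :=
  IsSliceOn Ω f ∧ DifferentiableOn ℝ f Ω ∧
    ∀ (x y : ℝ), ∀ I ∈ Sph, (x : H4) + y • I ∈ Ω →
      fderiv ℝ f ((x : H4) + y • I) 1 - I * fderiv ℝ f ((x : H4) + y • I) I = 0

/-- Slice Laplacian of `f` along the slice of `I`:
`∂²f/∂x² + ∂²f/∂y²` where derivatives are taken in the directions `1` and `I`. -/
def lapSlice (f : H4 → H4) (I q : H4) : H4 :=
  fderiv ℝ (fun p => fderiv ℝ f p 1) q 1 + fderiv ℝ (fun p => fderiv ℝ f p I) q I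

/-- Slice Laplacian for real-valued functions. -/
def lapSliceR (u : H4 → ℝ) (I q : H4) : ℝ :=
  fderiv ℝ (fun p => fderiv ℝ u p 1) q 1 + fderiv ℝ (fun p => fderiv ℝ u p I) q I

/-- The circularization Ω_D of a subset D of ℂ. -/
def circSet (D : Set ℂ) : Set H4 :=
  {q : H4 | ∃ (x y : ℝ), ∃ I ∈ Sph, (x + y * Complex.I) ∈ D ∧ q = (x : H4) + y • I}

set_option maxHeartbeats 1000000


lemma mem_sph_iff {q : H4} : q ∈ Sph ↔ q.re = 0 ∧ normSq q = 1 := by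
  constructor
  · intro h
    have h' : q ^ 2 = -1 := h
    have hn : normSq q ^ 2 = 1 := by
      have := congrArg normSq h'
      rw [map_pow] at this
      simpa using this
    have hnn : normSq q = 1 := by
      have h0 : (0:ℝ) ≤ normSq q := normSq_nonneg
      nlinarith
    refine ⟨?_, hnn⟩
    have := (Quaternion.sq_eq_neg_normSq (a := q))
    rw [← this, h', hnn]
    norm_num
  · rintro ⟨h1, h2⟩
    show q ^ 2 = -1
    have h3 := (Quaternion.sq_eq_neg_normSq (a := q)).2 h1
    rw [h3, h2]
    norm_num

lemma sph_mul_self {q : H4} (h : q ∈ Sph) : q * q = -1 := by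
  have : q ^ 2 = -1 := h
  rwa [sq] at this

lemma sph_ne_zero {q : H4} (h : q ∈ Sph) : q ≠ 0 := by
  intro h0
  have h2 := (mem_sph_iff.1 h).2
  rw [h0] at h2
  simp at h2

lemma sph_norm {q : H4} (h : q ∈ Sph) : ‖q‖ = 1 := by
  have h2 := (mem_sph_iff.1 h).2
  have := Quaternion.normSq_eq_norm_mul_self q
  nlinarith [norm_nonneg q]

lemma neg_mem_sph {q : H4} (h : q ∈ Sph) : -q ∈ Sph := by
  show (-q) ^ 2 = -1
  rw [neg_pow]; simpa using (show q ^ 2 = -1 from h)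

lemma isClosed_sph : IsClosed Sph := by
  have : Sph = (fun q : H4 => q ^ 2) ⁻¹' {-1} := rfl
  rw [this]
  exact IsClosed.preimage (by continuity) isClosed_singleton

lemma isCompact_sph : IsCompact Sph := by
  have hb : Bornology.IsBounded Sph := by
    exact isBounded_iff_forall_norm_le.2 ⟨1, fun q hq => le_of_eq (sph_norm hq)⟩
  exact Metric.isCompact_of_isClosed_isBounded isClosed_sph hb


lemma normSq_coe_add (t : ℝ) (w : H4) (hw : w.re = 0) :
    normSq ((t : H4) + w) = t ^ 2 + normSq w := by
  simp [Quaternion.normSq_def', hw]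
  ring

lemma norm_mul_self_eq (w : H4) : ‖w‖ * ‖w‖ = normSq w :=
  (Quaternion.normSq_eq_norm_mul_self w).symm

lemma ball_subset {Ω : Set H4} (hΩ : IsCircular Ω) {a b r : ℝ} (hb : 0 ≤ b)
    {I : H4} (hI : I ∈ Sph) (hball : Metric.closedBall ((a : H4) + b • I) r ⊆ Ω) :
    ∀ J ∈ Sph, Metric.closedBall ((a : H4) + b • J) r ⊆ Ω := by
  intro J hJ q hq
  rw [Metric.mem_closedBall, dist_eq_norm] at hq
  obtain ⟨y, K, hy, hK, hqK⟩ : ∃ (y : ℝ) (K : H4), 0 ≤ y ∧ K ∈ Sph ∧ q = (q.re : H4) + y • K := by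
    by_cases hv : q.im = 0
    · refine ⟨0, I, le_refl _, hI, ?_⟩
      conv_lhs => rw [← Quaternion.re_add_im q]
      rw [hv, add_zero, zero_smul, add_zero]
    · refine ⟨‖q.im‖, ‖q.im‖⁻¹ • q.im, norm_nonneg _, ?_, ?_⟩
      · rw [mem_sph_iff]
        constructor
        · simp [Quaternion.re_im]
        · rw [Quaternion.normSq_smul, ← norm_mul_self_eq]
          have : ‖q.im‖ ≠ 0 := norm_ne_zero_iff.2 hv
          field_simp
      · rw [smul_smul]
        have : ‖q.im‖ ≠ 0 := norm_ne_zero_iff.2 hv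
        rw [mul_inv_cancel₀ this, one_smul, Quaternion.re_add_im]
  -- key distance estimate
  have hrK : K.re = 0 := (mem_sph_iff.1 hK).1
  have hrJ : J.re = 0 := (mem_sph_iff.1 hJ).1
  have hrI : I.re = 0 := (mem_sph_iff.1 hI).1
  have hdiff : q - ((a : H4) + b • J) = ((q.re - a : ℝ) : H4) + (y • K - b • J) := by
    conv_lhs => rw [hqK]
    push_cast
    abel
  have h1 : normSq (q - ((a : H4) + b • J))
      = (q.re - a) ^ 2 + normSq (y • K - b • J) := by
    rw [hdiff, normSq_coe_add]
    simp [hrK, hrJ]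
  have h2 : (y - b) ^ 2 ≤ normSq (y • K - b • J) := by
    have hn : |y - b| ≤ ‖y • K - b • J‖ := by
      have := abs_norm_sub_norm_le (y • K) (b • J)
      rwa [norm_smul, norm_smul, sph_norm hK, sph_norm hJ, mul_one, mul_one,
        Real.norm_eq_abs, Real.norm_eq_abs, abs_of_nonneg hy, abs_of_nonneg hb] at this
    have := norm_mul_self_eq (y • K - b • J)
    nlinarith [abs_nonneg (y - b), sq_abs (y - b)]
  have h3 : normSq (((q.re : H4) + y • I) - ((a : H4) + b • I))
      = (q.re - a) ^ 2 + (y - b) ^ 2 := by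
    have he : ((q.re : H4) + y • I) - ((a : H4) + b • I)
        = ((q.re - a : ℝ) : H4) + ((y - b) • I) := by
      push_cast
      rw [sub_smul]
      abel
    rw [he, normSq_coe_add _ _ (by simp [hrI]), Quaternion.normSq_smul,
      (mem_sph_iff.1 hI).2, mul_one]
  have hmem : (q.re : H4) + y • I ∈ Metric.closedBall ((a : H4) + b • I) r := by
    rw [Metric.mem_closedBall, dist_eq_norm]
    have e1 := norm_mul_self_eq (((q.re : H4) + y • I) - ((a : H4) + b • I))
    have e2 := norm_mul_self_eq (q - ((a : H4) + b • J))
    have hr0 : 0 ≤ r := le_trans (norm_nonneg _) hq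
    nlinarith [norm_nonneg (((q.re : H4) + y • I) - ((a : H4) + b • I)),
      norm_nonneg (q - ((a : H4) + b • J))]
  have := hΩ q.re y I hI K hK (hball hmem)
  rwa [← hqK] at this


def qi : H4 := ⟨0,1,0,0⟩
def qj : H4 := ⟨0,0,1,0⟩

lemma qi_mul_qi : qi * qi = -1 := by
  ext <;> simp [Quaternion.re_mul, Quaternion.imI_mul, Quaternion.imJ_mul, Quaternion.imK_mul] <;> simp [qi]

lemma exists_u {J : H4} (hJ : J ∈ Sph) : ∃ u : H4, u ≠ 0 ∧ u * qi = J * u := by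
  by_cases hJi : J = -qi
  · refine ⟨qj, ?_, ?_⟩
    · intro h0
      have := congrArg QuaternionAlgebra.imJ h0
      simp [qj] at this
    · subst hJi
      ext <;> simp [Quaternion.re_mul, Quaternion.imI_mul, Quaternion.imJ_mul,
        Quaternion.imK_mul] <;> simp [qi, qj]
  · refine ⟨1 - J * qi, ?_, ?_⟩
    · intro h0
      apply hJi
      have h1 : J * qi = 1 := (sub_eq_zero.1 h0).symm
      have h2 : (J * qi) * qi = qi := by rw [h1, one_mul]
      rw [mul_assoc, qi_mul_qi] at h2
      have : -J = qi := by simpa using h2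
      rw [← this]; simp
    · have hJJ : J * J = -1 := sph_mul_self hJ
      rw [sub_mul, one_mul, mul_assoc, qi_mul_qi, mul_sub, mul_one, ← mul_assoc, hJJ,
        mul_neg, mul_one, neg_one_mul, sub_neg_eq_add, sub_neg_eq_add]
      exact add_comm qi J

/-- The real-linear identification of `H4` with `ℂ × ℂ` intertwining left multiplication
by `qi` with multiplication by `Complex.I`. -/
def PhiL : H4 ≃ₗ[ℝ] ℂ × ℂ where
  toFun q := (⟨q.re, q.imI⟩, ⟨q.imJ, q.imK⟩)
  invFun p := ⟨p.1.re, p.1.im, p.2.re, p.2.im⟩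
  map_add' := by intros; simp [Prod.ext_iff, Complex.ext_iff]
  map_smul' := by intros; simp [Prod.ext_iff, Complex.ext_iff]
  left_inv := fun q => rfl
  right_inv := fun p => rfl

def Phi : H4 ≃L[ℝ] ℂ × ℂ := PhiL.toContinuousLinearEquiv

lemma Phi_qi_mul (v : H4) : Phi (qi * v) = Complex.I • Phi v := by
  show PhiL (qi * v) = Complex.I • PhiL v
  change ((⟨(qi*v).re, (qi*v).imI⟩, ⟨(qi*v).imJ, (qi*v).imK⟩) : ℂ × ℂ) = Complex.I • ((⟨v.re, v.imI⟩, ⟨v.imJ, v.imK⟩) : ℂ × ℂ)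
  simp [PhiL, Prod.ext_iff, Complex.ext_iff, Quaternion.re_mul, Quaternion.imI_mul,
    Quaternion.imJ_mul, Quaternion.imK_mul, Complex.I_re, Complex.I_im] <;> simp [qi]

lemma csmul_real (x : ℝ) (v : ℂ × ℂ) : ((x : ℝ) : ℂ) • v = x • v := by
  rw [show ((x : ℝ) : ℂ) = x • (1 : ℂ) by simp, smul_assoc, one_smul]

def psiJ (J : H4) : ℂ →L[ℝ] H4 :=
  (Complex.reCLM.smulRight (1 : H4)) + (Complex.imCLM.smulRight J)

lemma psiJ_apply (J : H4) (z : ℂ) : psiJ J z = ((z.re : ℝ) : H4) + z.im • J := by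
  simp [psiJ, ContinuousLinearMap.smulRight_apply]
  rw [← Quaternion.algebraMap_def, Algebra.algebraMap_eq_smul_one]

lemma sliceMV (Ω : Set H4) (hΩopen : IsOpen Ω) (f : H4 → H4)
    (hreg : IsSliceRegularOn Ω f) (a b r : ℝ) (hr : 0 < r) (J : H4) (hJ : J ∈ Sph)
    (hball : Metric.closedBall ((a : H4) + b • J) r ⊆ Ω) :
    ∫ θ in (0:ℝ)..(2 * Real.pi),
        f ((a : H4) + b • J + ((r * Real.cos θ : ℝ) : H4) + (r * Real.sin θ) • J)
      = (2 * Real.pi) • f ((a : H4) + b • J) := by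
  obtain ⟨hslice, hdiff, hcr⟩ := hreg
  obtain ⟨u, hu0, huq⟩ := exists_u hJ
  have hqiu : qi * u⁻¹ = u⁻¹ * J := by
    have h1 : u⁻¹ * (u * qi) * u⁻¹ = u⁻¹ * (J * u) * u⁻¹ := by rw [huq]
    rw [← mul_assoc, inv_mul_cancel₀ hu0, one_mul] at h1
    rw [mul_assoc, mul_assoc, mul_inv_cancel₀ hu0, mul_one] at h1
    exact h1
  set ψ : ℂ →L[ℝ] H4 := psiJ J with hψdef
  set g : ℂ → ℂ × ℂ := fun z => Phi (u⁻¹ * f (ψ z)) with hg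
  set c : ℂ := ⟨a, b⟩ with hc
  have hcre : c.re = a := rfl
  have hcim : c.im = b := rfl
  have hψc : ψ c = (a : H4) + b • J := by rw [psiJ_apply]
  have hsub : ∀ z ∈ Metric.closedBall c r, ψ z ∈ Ω := by
    intro z hz
    apply hball
    rw [Metric.mem_closedBall, dist_eq_norm] at hz ⊢
    have he : ψ z - ((a : H4) + b • J) = ((z.re - a : ℝ) : H4) + (z.im - b) • J := by
      rw [psiJ_apply]
      push_cast
      rw [sub_smul]
      abel
    have h1 : normSq (ψ z - ((a : H4) + b • J)) = (z.re - a) ^ 2 + (z.im - b) ^ 2 := by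
      rw [he, normSq_coe_add _ _ (by simp [(mem_sph_iff.1 hJ).1]), Quaternion.normSq_smul,
        (mem_sph_iff.1 hJ).2, mul_one]
    have h2 : ‖z - c‖ * ‖z - c‖ = (z.re - a) ^ 2 + (z.im - b) ^ 2 := by
      have h2a := Complex.sq_norm (z - c)
      rw [Complex.normSq_apply, sq] at h2a
      simp only [Complex.sub_re, Complex.sub_im, hcre, hcim] at h2a
      nlinarith [h2a]
    have e1 := norm_mul_self_eq (ψ z - ((a : H4) + b • J))
    nlinarith [norm_nonneg (ψ z - ((a : H4) + b • J)), norm_nonneg (z - c),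
      le_trans (norm_nonneg (z-c)) hz]
  have key : ∀ z : ℂ, ψ z ∈ Ω →
      HasFDerivAt g ((1 : ℂ →L[ℂ] ℂ).smulRight (Phi (u⁻¹ * fderiv ℝ f (ψ z) 1))) z := by
    intro z hp
    have hfd : DifferentiableAt ℝ f (ψ z) := hdiff.differentiableAt (hΩopen.mem_nhds hp)
    set D := fderiv ℝ f (ψ z) with hD
    have hcr' : D 1 + J * D J = 0 := by
      have := hcr z.re z.im J hJ (by rwa [← psiJ_apply])
      rwa [← psiJ_apply] at this
    have hDJ : D J = J * D 1 := by
      have h1 : J * (D 1) + J * (J * (D J)) = 0 := by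
        rw [← mul_add, hcr', mul_zero]
      rw [← mul_assoc, sph_mul_self hJ, neg_one_mul] at h1
      exact (add_neg_eq_zero.1 h1).symm
    have hDg : HasFDerivAt g
        (((Phi : H4 →L[ℝ] ℂ × ℂ).comp ((ContinuousLinearMap.mul ℝ H4) u⁻¹)).comp
          (D.comp ψ)) z := by
      have h1 : HasFDerivAt f D (ψ z) := hfd.hasFDerivAt
      have h2 : HasFDerivAt ψ (ψ : ℂ →L[ℝ] H4) z := ψ.hasFDerivAt
      exact (((Phi : H4 →L[ℝ] ℂ × ℂ).comp
        ((ContinuousLinearMap.mul ℝ H4) u⁻¹)).hasFDerivAt).comp z (h1.comp z h2)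
    apply hasFDerivAt_of_restrictScalars ℝ hDg
    apply ContinuousLinearMap.ext
    intro w
    have hw : w = w.re • (1 : ℂ) + w.im • Complex.I := by
      simp [Complex.real_smul]
    rw [hw]
    rw [map_add, map_add, _root_.map_smul, _root_.map_smul, _root_.map_smul, _root_.map_smul]
    have hψ1 : ψ (1 : ℂ) = 1 := by rw [psiJ_apply]; simp
    have hψI : ψ Complex.I = J := by rw [psiJ_apply]; simp
    have hv1 : (((1 : ℂ →L[ℂ] ℂ).smulRight (Phi (u⁻¹ * D 1))).restrictScalars ℝ) (1 : ℂ)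
        = Phi (u⁻¹ * D 1) := by simp
    have hv2 : (((1 : ℂ →L[ℂ] ℂ).smulRight (Phi (u⁻¹ * D 1))).restrictScalars ℝ) Complex.I
        = Complex.I • Phi (u⁻¹ * D 1) := by simp
    have hr1 : ((((Phi : H4 →L[ℝ] ℂ × ℂ).comp ((ContinuousLinearMap.mul ℝ H4) u⁻¹)).comp
        (D.comp ψ)) : ℂ →L[ℝ] ℂ × ℂ) (1 : ℂ) = Phi (u⁻¹ * D 1) := by
      simp [hψ1]
    have hr2 : ((((Phi : H4 →L[ℝ] ℂ × ℂ).comp ((ContinuousLinearMap.mul ℝ H4) u⁻¹)).comp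
        (D.comp ψ)) : ℂ →L[ℝ] ℂ × ℂ) Complex.I = Phi (u⁻¹ * D J) := by
      simp [hψI]
    rw [hv1, hv2, hr1, hr2, hDJ, ← mul_assoc, ← hqiu, mul_assoc, Phi_qi_mul]
  have hd : DifferentiableOn ℂ g (Metric.closedBall c r) := by
    intro z hz
    exact ((key z (hsub z hz)).differentiableAt).differentiableWithinAt
  have hcauchy := hd.circleIntegral_sub_inv_smul (Metric.mem_ball_self hr)
  rw [circleIntegral] at hcauchy
  have hintegrand : ∀ θ : ℝ,
      deriv (circleMap c r) θ • ((circleMap c r θ - c)⁻¹ • g (circleMap c r θ))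
        = Complex.I • g (circleMap c r θ) := by
    intro θ
    have h0 : circleMap 0 r θ ≠ 0 := by
      simpa using circleMap_ne_center (c := (0:ℂ)) (R := r) hr.ne' (θ := θ)
    rw [deriv_circleMap, circleMap_sub_center, smul_smul]
    congr 1
    rw [mul_comm (circleMap 0 r θ) Complex.I, mul_assoc, mul_inv_cancel₀ h0, mul_one]
  simp only [hintegrand] at hcauchy
  rw [intervalIntegral.integral_smul] at hcauchy
  have h3 : ∫ θ in (0:ℝ)..(2*Real.pi), g (circleMap c r θ)
      = (2 * Real.pi) • g c := by
    have h3a := congrArg (fun w => (Complex.I)⁻¹ • w) hcauchy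
    rw [inv_smul_smul₀ Complex.I_ne_zero, smul_smul] at h3a
    rw [h3a, ← csmul_real]
    congr 1
    push_cast
    field_simp
  have hpt : ∀ θ : ℝ, ψ (circleMap c r θ)
      = (a : H4) + b • J + ((r * Real.cos θ : ℝ) : H4) + (r * Real.sin θ) • J := by
    intro θ
    rw [hψdef, psiJ_apply]
    have hre : (circleMap c r θ).re = a + r * Real.cos θ := by
      simp [circleMap, Complex.exp_mul_I, hcre, Complex.cos_ofReal_re, Complex.sin_ofReal_re,
        Complex.cos_ofReal_im, Complex.sin_ofReal_im]
    have him : (circleMap c r θ).im = b + r * Real.sin θ := by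
      simp [circleMap, Complex.exp_mul_I, hcim, Complex.cos_ofReal_re, Complex.sin_ofReal_re,
        Complex.cos_ofReal_im, Complex.sin_ofReal_im]
    rw [hre, him]
    push_cast
    rw [add_smul]
    abel
  have hint : Continuous (fun θ : ℝ => f (ψ (circleMap c r θ))) := by
    have hcont : Continuous (fun θ : ℝ => ψ (circleMap c r θ)) :=
      ψ.continuous.comp (continuous_circleMap c r)
    apply hdiff.continuousOn.comp_continuous hcont
    intro θ
    exact hsub _ (circleMap_mem_closedBall c hr.le θ)
  have hintH : IntervalIntegrable (fun θ : ℝ => u⁻¹ * f (ψ (circleMap c r θ)))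
      MeasureTheory.volume 0 (2*Real.pi) :=
    (continuous_const.mul hint).intervalIntegrable _ _
  -- pull Phi out of the integral
  have h4 : ∫ θ in (0:ℝ)..(2*Real.pi), g (circleMap c r θ)
      = Phi (∫ θ in (0:ℝ)..(2*Real.pi), u⁻¹ * f (ψ (circleMap c r θ))) := by
    exact (Phi : H4 →L[ℝ] ℂ × ℂ).intervalIntegral_comp_comm hintH
  have h5 : (∫ θ in (0:ℝ)..(2*Real.pi), u⁻¹ * f (ψ (circleMap c r θ)))
      = (2 * Real.pi) • (u⁻¹ * f (ψ c)) := by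
    apply Phi.injective
    rw [← h4, h3, hg]
    simp only [_root_.map_smul]
  have h6 : ∀ θ : ℝ, u * (u⁻¹ * f (ψ (circleMap c r θ)))
      = f ((a : H4) + b • J + ((r * Real.cos θ : ℝ) : H4) + (r * Real.sin θ) • J) := by
    intro θ
    rw [← mul_assoc, mul_inv_cancel₀ hu0, one_mul, hpt θ]
  have h7 := ((ContinuousLinearMap.mul ℝ H4) u).intervalIntegral_comp_comm hintH
  rw [h5] at h7
  simp only [ContinuousLinearMap.mul_apply'] at h7
  have h8 : (∫ θ in (0:ℝ)..(2*Real.pi),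
      f ((a : H4) + b • J + ((r * Real.cos θ : ℝ) : H4) + (r * Real.sin θ) • J))
      = u * ((2*Real.pi) • (u⁻¹ * f (ψ c))) := by
    rw [← h7]
    apply intervalIntegral.integral_congr
    intro θ _
    exact (h6 θ).symm
  rw [h8, mul_smul_comm, ← mul_assoc, mul_inv_cancel₀ hu0, one_mul, hψc]

lemma ae_sph {m : MeasurableSpace H4} (μ : Measure H4) (hμS : μ Sphᶜ = 0) :
    ∀ᵐ J ∂μ, J ∈ Sph := by
  rw [MeasureTheory.ae_iff]
  exact hμS

lemma integ {m : MeasurableSpace H4} [BorelSpace H4] (μ : Measure H4) [IsProbabilityMeasure μ]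
    (hμS : μ Sphᶜ = 0) (g : H4 → H4) (hg : ContinuousOn g Sph) : Integrable g μ := by
  have hrs : μ.restrict Sph = μ :=
    Measure.restrict_eq_self_of_ae_mem (ae_sph μ hμS)
  rw [← hrs]
  exact hg.integrableOn_compact isCompact_sph

lemma coe_cont : Continuous (fun x : ℝ => (x : H4)) := by
  simpa [Quaternion.algebraMap_def] using (continuous_algebraMap ℝ H4)


/-- General Mean Value Formula for slice regular functions. -/
theorem stmt_1 [MeasurableSpace H4] [BorelSpace H4]
    (Ω : Set H4) (hΩopen : IsOpen Ω) (hΩ : IsCircular Ω)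
    (f : H4 → H4) (hf : IsSliceRegularOn Ω f)
    (μ : Measure H4) [IsProbabilityMeasure μ] (hμS : μ Sphᶜ = 0)
    (hμinv : Measure.map (fun J : H4 => -J) μ = μ)
    (a b r : ℝ) (hb : 0 ≤ b) (hr : 0 < r) (I : H4) (hI : I ∈ Sph)
    (hball : Metric.closedBall ((a : H4) + b • I) r ⊆ Ω) :
    f ((a : H4) + b • I)
      = (2 * Real.pi)⁻¹ •
          ∫ J, (∫ θ in (0:ℝ)..(2 * Real.pi),
            (1 - I * J) *
              f ((a : H4) + b • J + ((r * Real.cos θ : ℝ) : H4) + (r * Real.sin θ) • J)) ∂μ := by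
  have hcont : ContinuousOn f Ω := hf.2.1.continuousOn
  have hballJ : ∀ J ∈ Sph, Metric.closedBall ((a : H4) + b • J) r ⊆ Ω :=
    ball_subset hΩ hb hI hball
  have hmem : ∀ J ∈ Sph, (a : H4) + b • J ∈ Ω :=
    fun J hJ => hballJ J hJ (Metric.mem_closedBall_self hr.le)
  have hmem' : ∀ J ∈ Sph, (a : H4) - b • J ∈ Ω := by
    intro J hJ
    have := hmem (-J) (neg_mem_sph hJ)
    simpa [smul_neg, sub_eq_add_neg] using this
  have hc1 : ContinuousOn (fun J : H4 => f ((a : H4) + b • J)) Sph := by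
    apply hcont.comp (Continuous.continuousOn (by fun_prop))
    exact hmem
  have hc2 : ContinuousOn (fun J : H4 => f ((a : H4) - b • J)) Sph := by
    apply hcont.comp (Continuous.continuousOn (by fun_prop))
    exact hmem'
  set g1 : H4 → H4 := fun J => (1 - I * J) / 2 * f ((a : H4) + b • J) with hg1
  set g2 : H4 → H4 := fun J => (1 + I * J) / 2 * f ((a : H4) - b • J) with hg2
  have hg1c : ContinuousOn g1 Sph := by
    apply ContinuousOn.mul _ hc1
    exact Continuous.continuousOn (by fun_prop)
  have hg2c : ContinuousOn g2 Sph := by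
    apply ContinuousOn.mul _ hc2
    exact Continuous.continuousOn (by fun_prop)
  have hint1 : Integrable g1 μ := integ μ hμS g1 hg1c
  have hint2 : Integrable g2 μ := integ μ hμS g2 hg2c
  have hrep : ∀ J ∈ Sph, g1 J + g2 J = f ((a : H4) + b • I) :=
    fun J hJ => (hf.1 a b J hJ I hI (hmem J hJ)).symm
  have hI1 : ∫ J, (g1 J + g2 J) ∂μ = f ((a : H4) + b • I) := by
    have : ∫ J, (g1 J + g2 J) ∂μ = ∫ _J, f ((a : H4) + b • I) ∂μ := by
      apply integral_congr_ae
      filter_upwards [ae_sph μ hμS] with J hJ using hrep J hJ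
    rw [this, integral_const]
    simp [measure_univ]
  have hneg : ∫ J, g2 J ∂μ = ∫ J, g1 J ∂μ := by
    have h1 : ∫ J, g2 J ∂μ = ∫ J, g2 (-J) ∂μ := by
      conv_lhs => rw [← hμinv]
      rw [integral_map measurable_neg.aemeasurable]
      rw [hμinv]
      exact hint2.1
    rw [h1]
    congr 1
    funext J
    rw [hg1, hg2]
    simp only [mul_neg, smul_neg, sub_neg_eq_add, ← sub_eq_add_neg]
  have hL1 : ∫ J, (1 - I * J) * f ((a : H4) + b • J) ∂μ = f ((a : H4) + b • I) := by
    have h3 : (fun J : H4 => (1 - I * J) * f ((a : H4) + b • J)) = fun J => g1 J + g1 J := by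
      funext J
      rw [hg1]
      dsimp only
      have h20 : (2 : H4) ≠ 0 := by
        have h21 : ((2:ℝ) : H4) ≠ ((0:ℝ) : H4) := fun hc =>
          (by norm_num : (2:ℝ) ≠ 0) (Quaternion.coe_injective hc)
        rw [show ((2:ℝ) : H4) = (2 : H4) by
            rw [show (2:ℝ) = 1 + 1 by norm_num, Quaternion.coe_add, Quaternion.coe_one]
            norm_num,
          show ((0:ℝ) : H4) = (0 : H4) by exact Quaternion.coe_zero] at h21
        exact h21
      have hhalf : ∀ (x w : H4), x / 2 * w + x / 2 * w = x * w := by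
        intro x w
        rw [← add_mul, ← add_div, ← mul_two, div_eq_mul_inv, mul_assoc x 2 2⁻¹,
          mul_inv_cancel₀ h20, mul_one]
      exact (hhalf (1 - I * J) (f ((a : H4) + b • J))).symm
    rw [h3, integral_add hint1 hint1]
    nth_rewrite 2 [← hneg]
    rw [← integral_add hint1 hint2]
    exact hI1
  -- points on the circle lie in Ω
  have hptΩ : ∀ J ∈ Sph, ∀ θ : ℝ,
      (a : H4) + b • J + ((r * Real.cos θ : ℝ) : H4) + (r * Real.sin θ) • J ∈ Ω := by
    intro J hJ θ
    apply hballJ J hJ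
    rw [Metric.mem_closedBall, dist_eq_norm]
    have he : ((a : H4) + b • J + ((r * Real.cos θ : ℝ) : H4) + (r * Real.sin θ) • J)
        - ((a : H4) + b • J) = ((r * Real.cos θ : ℝ) : H4) + (r * Real.sin θ) • J := by abel
    rw [he]
    have h1 : normSq (((r * Real.cos θ : ℝ) : H4) + (r * Real.sin θ) • J)
        = (r * Real.cos θ) ^ 2 + (r * Real.sin θ) ^ 2 := by
      rw [normSq_coe_add _ _ (by simp [(mem_sph_iff.1 hJ).1]), Quaternion.normSq_smul,
        (mem_sph_iff.1 hJ).2, mul_one]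
    have h2 : (r * Real.cos θ) ^ 2 + (r * Real.sin θ) ^ 2 = r ^ 2 := by
      have := Real.sin_sq_add_cos_sq θ
      nlinarith
    have e1 := norm_mul_self_eq (((r * Real.cos θ : ℝ) : H4) + (r * Real.sin θ) • J)
    nlinarith [norm_nonneg (((r * Real.cos θ : ℝ) : H4) + (r * Real.sin θ) • J), hr.le]
  have hin : ∀ J ∈ Sph,
      (∫ θ in (0:ℝ)..(2 * Real.pi), (1 - I * J) *
        f ((a : H4) + b • J + ((r * Real.cos θ : ℝ) : H4) + (r * Real.sin θ) • J))
      = (2 * Real.pi) • ((1 - I * J) * f ((a : H4) + b • J)) := by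
    intro J hJ
    have hptc : Continuous (fun θ : ℝ =>
        (a : H4) + b • J + ((r * Real.cos θ : ℝ) : H4) + (r * Real.sin θ) • J) := by
      apply Continuous.add
      apply Continuous.add continuous_const
      · exact coe_cont.comp (continuous_const.mul Real.continuous_cos)
      · exact (continuous_const.mul Real.continuous_sin).smul continuous_const
    have hic : Continuous (fun θ : ℝ =>
        f ((a : H4) + b • J + ((r * Real.cos θ : ℝ) : H4) + (r * Real.sin θ) • J)) := by
      apply hcont.comp_continuous hptc
      exact hptΩ J hJ
    have hii : IntervalIntegrable (fun θ : ℝ =>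
        f ((a : H4) + b • J + ((r * Real.cos θ : ℝ) : H4) + (r * Real.sin θ) • J))
        MeasureTheory.volume 0 (2 * Real.pi) := hic.intervalIntegrable _ _
    have hpull := ((ContinuousLinearMap.mul ℝ H4) (1 - I * J)).intervalIntegral_comp_comm hii
    simp only [ContinuousLinearMap.mul_apply'] at hpull
    rw [hpull, sliceMV Ω hΩopen f hf a b r hr J hJ (hballJ J hJ), mul_smul_comm]
  have houter : ∫ J, (∫ θ in (0:ℝ)..(2 * Real.pi), (1 - I * J) *
        f ((a : H4) + b • J + ((r * Real.cos θ : ℝ) : H4) + (r * Real.sin θ) • J)) ∂μ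
      = ∫ J, (2 * Real.pi) • ((1 - I * J) * f ((a : H4) + b • J)) ∂μ := by
    apply integral_congr_ae
    filter_upwards [ae_sph μ hμS] with J hJ using hin J hJ
  rw [houter, integral_smul, hL1, smul_smul,
    inv_mul_cancel₀ (by positivity : (2 * Real.pi) ≠ 0), one_smul]
end
end

section
/- Mean Value Formula at real points: Let Ω ⊆ ℍ be an open circular set, let f : Ω → ℍ be slice regular, let a ∈ ℝ and r > 0 be such that Ω contains the closed ball of radius r centered at a, and let μ be a probability measure on 𝕊 invariant under the involution J ↦ −J. Then f(a) = (1/2π) ∫_𝕊 ∫₀^{2π} f(a + r cos θ + r sin θ · I) dθ dμ(I). -/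
open Quaternion MeasureTheory Metric Filter

noncomputable section

lemma sph_normSq {I : H4} (hI : I ^ 2 = -1) : Quaternion.normSq I = 1 := by
  have h2 : (Quaternion.normSq I) ^ 2 = 1 := by
    have := map_pow Quaternion.normSq I 2
    rw [hI] at this
    simpa [Quaternion.normSq_neg] using this.symm
  have h0 : (0:ℝ) ≤ Quaternion.normSq I := Quaternion.normSq_nonneg
  have hne : Quaternion.normSq I ≠ -1 := by linarith
  have h3 : (Quaternion.normSq I - 1) * (Quaternion.normSq I + 1) = 0 := by
    linear_combination h2
  rcases mul_eq_zero.mp h3 with h | h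
  · linarith
  · exact absurd (by linarith) hne

lemma sph_re {I : H4} (hI : I ^ 2 = -1) : I.re = 0 := by
  have := (Quaternion.sq_eq_neg_normSq (a := I)).mp ?_
  · exact this
  · rw [hI, sph_normSq hI]; norm_num

lemma norm_slice {I : H4} (hI : I ^ 2 = -1) (c : ℂ) :
    ‖((c.re : H4) + c.im • I)‖ = ‖c‖ := by
  have hre := sph_re hI
  have hns := sph_normSq hI
  have h1 : Quaternion.normSq ((c.re : H4) + c.im • I) = Complex.normSq c := by
    rw [Quaternion.normSq_def'] at hns ⊢
    simp [hre, Complex.normSq_apply]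
    linear_combination c.im ^ 2 * hns - c.im ^ 2 * I.re * hre
  rw [← Real.sqrt_sq (norm_nonneg ((c.re : H4) + c.im • I)), ← Real.sqrt_sq (norm_nonneg c)]
  congr 1
  rw [sq, sq, ← Quaternion.normSq_eq_norm_mul_self, ← sq,
    ← Complex.normSq_eq_norm_sq]
  exact h1

def qphi {I : H4} (hI : I ^ 2 = -1) : ℂ →+* H4 where
  toFun c := (c.re : H4) + c.im • I
  map_one' := by simp
  map_zero' := by simp
  map_add' c d := by
    simp only [Complex.add_re, Complex.add_im, Quaternion.coe_add, add_smul]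
    abel
  map_mul' c d := by
    have hre := sph_re hI
    have hns := sph_normSq hI
    rw [Quaternion.normSq_def'] at hns
    ext
    · simp [Quaternion.re_mul, hre, Complex.mul_re]
      linear_combination (c.im * d.im) * hns - (c.im * d.im * I.re) * hre
    · simp [Quaternion.imI_mul, hre, Complex.mul_im]
      ring
    · simp [Quaternion.imJ_mul, hre, Complex.mul_im]
      ring
    · simp [Quaternion.imK_mul, hre, Complex.mul_im]
      ring

lemma smul_one_h4 (x : ℝ) : x • (1 : H4) = (x : H4) := by
  rw [← Quaternion.coe_one, Quaternion.smul_coe, mul_one]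

lemma qphi_apply {I : H4} (hI : I ^ 2 = -1) (c : ℂ) :
    qphi hI c = (c.re : H4) + c.im • I := rfl

lemma nsext {E : Type*} [SeminormedAddCommGroup E] {n1 n2 : NormedSpace ℝ E}
    (h : n1.toModule = n2.toModule) : n1 = n2 := by
  cases n1; cases n2
  cases h
  rfl

set_option maxHeartbeats 1000000 in
lemma slice_mvp (Ω : Set H4) (hΩopen : IsOpen Ω)
    (f : H4 → H4) (hdiff : DifferentiableOn ℝ f Ω)
    (hcr : ∀ (x y : ℝ), ∀ I : H4, I ^ 2 = -1 → (x : H4) + y • I ∈ Ω →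
      fderiv ℝ f ((x : H4) + y • I) 1 + I * fderiv ℝ f ((x : H4) + y • I) I = 0)
    (a r : ℝ) (hr : 0 < r) (hball : Metric.closedBall ((a : H4)) r ⊆ Ω)
    (I : H4) (hI : I ^ 2 = -1) :
    (∫ θ in (0:ℝ)..(2 * Real.pi),
        f (((a + r * Real.cos θ : ℝ) : H4) + (r * Real.sin θ) • I))
      = (2 * Real.pi) • f (a : H4) := by
  letI modC : Module ℂ H4 := Module.compHom H4 (qphi hI)
  have hsmul : ∀ (c : ℂ) (q : H4), c • q = ((c.re : H4) + c.im • I) * q := fun c q => rfl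
  have hphismul : ∀ (x : ℝ) (c : ℂ), qphi hI (x • c) = x • qphi hI c := by
    intro x c
    simp only [qphi_apply, Complex.real_smul, smul_add, smul_smul]
    norm_num [Complex.re_ofReal_mul, Complex.im_ofReal_mul, Quaternion.smul_coe]
  letI : IsScalarTower ℝ ℂ H4 :=
    ⟨fun x c q => by
      show qphi hI (x • c) * q = x • (qphi hI c * q)
      rw [hphismul, smul_mul_assoc]⟩
  letI : SMulCommClass ℝ ℂ H4 :=
    ⟨fun x c q => by
      show x • (qphi hI c * q) = qphi hI c * (x • q)
      rw [mul_smul_comm]⟩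
  letI : NormedSpace ℂ H4 :=
    { modC with
      norm_smul_le := fun c q => by
        show ‖qphi hI c * q‖ ≤ ‖c‖ * ‖q‖
        rw [norm_mul, qphi_apply, norm_slice hI] }
  set L : ℂ →L[ℝ] H4 := Complex.reCLM.smulRight (1 : H4) + Complex.imCLM.smulRight I with hL
  have hLapply : ∀ z : ℂ, L z = (z.re : H4) + z.im • I := by
    intro z
    simp [hL, smul_one_h4]
  have embed_eq : ∀ z : ℂ, ((a : H4) + L z) = ((a + z.re : ℝ) : H4) + z.im • I := by
    intro z
    rw [hLapply]
    push_cast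
    rw [add_assoc]
  set F : ℂ → H4 := fun z => f ((a : H4) + L z) with hF
  have hmem : ∀ z : ℂ, z ∈ Metric.closedBall (0 : ℂ) r → ((a : H4) + L z) ∈ Ω := by
    intro z hz
    apply hball
    rw [Metric.mem_closedBall, dist_eq_norm] at hz ⊢
    rw [add_comm, add_sub_cancel_right, hLapply, norm_slice hI]
    simpa using hz
  have hdiffC : ∀ z ∈ Metric.closedBall (0 : ℂ) r, DifferentiableAt ℂ F z := by
    intro z hz
    have hmemΩ := hmem z hz
    have hfd : DifferentiableAt ℝ f ((a : H4) + L z) :=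
      (hdiff _ hmemΩ).differentiableAt (hΩopen.mem_nhds hmemΩ)
    have hDf := hfd.hasFDerivAt
    set Df := fderiv ℝ f ((a : H4) + L z) with hDfdef
    have hcr1 : Df 1 + I * Df I = 0 := by
      have h := hcr (a + z.re) z.im I hI (by rw [← embed_eq]; exact hmemΩ)
      rw [← embed_eq] at h
      exact h
    have hII : I * I = -1 := by rw [← sq, hI]
    have hDfI : Df I = I * Df 1 := by
      have h2 : I * (Df 1 + I * Df I) = I * 0 := by rw [hcr1]
      rw [mul_add, ← mul_assoc, hII, mul_zero, neg_one_mul] at h2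
      exact (add_neg_eq_zero.mp h2).symm
    have hFreal : HasFDerivAt F (Df.comp L) z := by
      have hemb : HasFDerivAt (fun w : ℂ => (a : H4) + L w) L z := L.hasFDerivAt.const_add _
      exact hDf.comp z hemb
    set L' : ℂ →L[ℂ] H4 := ContinuousLinearMap.smulRight (1 : ℂ →L[ℂ] ℂ) (Df (1 : H4)) with hL'
    have hrestrict : L'.restrictScalars ℝ = Df.comp L := by
      apply ContinuousLinearMap.ext
      intro w
      show w • Df 1 = Df (L w)
      rw [hsmul, hLapply, add_mul, Quaternion.coe_mul_eq_smul, smul_mul_assoc, ← hDfI,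
        map_add, ← smul_one_h4 w.re, Df.map_smul, Df.map_smul]
    have hC : HasFDerivAt F L' z := hasFDerivAt_of_restrictScalars (𝕜 := ℝ) hFreal hrestrict
    exact hC.differentiableAt
  have hdiffOn : DifferentiableOn ℂ F (Metric.closedBall 0 r) :=
    fun z hz => (hdiffC z hz).differentiableWithinAt
  have hdcc : DiffContOnCl ℂ F (Metric.ball (0:ℂ) r) :=
    DifferentiableOn.diffContOnCl (by rwa [closure_ball (0:ℂ) hr.ne'])
  have hcauchy : (∮ z in C((0:ℂ), r), (z - 0)⁻¹ • F z) = (2 * Real.pi * Complex.I : ℂ) • F 0 :=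
    hdcc.circleIntegral_sub_inv_smul (Metric.mem_ball_self hr)
  have hcircle : (∮ z in C((0:ℂ), r), (z - 0)⁻¹ • F z)
      = Complex.I • ∫ θ in (0:ℝ)..(2 * Real.pi), F (circleMap 0 r θ) := by
    have hpt : ∀ θ : ℝ,
        deriv (circleMap 0 r) θ • (circleMap 0 r θ - 0)⁻¹ • F (circleMap 0 r θ)
          = Complex.I • F (circleMap 0 r θ) := by
      intro θ
      have hne : circleMap 0 r θ ≠ 0 := circleMap_ne_center hr.ne'
      rw [deriv_circleMap, sub_zero, smul_smul,
        mul_comm (circleMap 0 r θ) Complex.I, mul_assoc, mul_inv_cancel₀ hne, mul_one]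
    have hNS : (NormedSpace.complexToReal : NormedSpace ℝ H4) = (inferInstance : NormedSpace ℝ H4) := by
      apply nsext
      apply Module.ext'
      intro c q
      show ((c : ℝ) : ℂ) • q = c • q
      rw [hsmul]
      simp [Quaternion.coe_mul_eq_smul]
    rw [circleIntegral, ← intervalIntegral.integral_smul]
    simp only [hpt]
    rw [hNS]
  have hF0 : F 0 = f (a : H4) := by simp [hF]
  have hInt : (∫ θ in (0:ℝ)..(2 * Real.pi), F (circleMap 0 r θ))
      = ∫ θ in (0:ℝ)..(2 * Real.pi),
          f (((a + r * Real.cos θ : ℝ) : H4) + (r * Real.sin θ) • I) := by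
    have hpt2 : ∀ θ : ℝ, F (circleMap 0 r θ)
        = f (((a + r * Real.cos θ : ℝ) : H4) + (r * Real.sin θ) • I) := by
      intro θ
      show f ((a : H4) + L (circleMap 0 r θ)) = _
      rw [embed_eq]
      have hre : (circleMap 0 r θ).re = r * Real.cos θ := by
        simp [circleMap, Complex.re_ofReal_mul, Complex.exp_ofReal_mul_I_re]
      have him : (circleMap 0 r θ).im = r * Real.sin θ := by
        simp [circleMap, Complex.im_ofReal_mul, Complex.exp_ofReal_mul_I_im]
      rw [hre, him]
    simp only [hpt2]
  have key : Complex.I • (∫ θ in (0:ℝ)..(2 * Real.pi), F (circleMap 0 r θ))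
      = Complex.I • ((2 * Real.pi : ℝ) • F 0) := by
    rw [← hcircle, hcauchy,
      show (2 * Real.pi * Complex.I : ℂ) = Complex.I * ((2 * Real.pi : ℝ) : ℂ) by
        push_cast; ring,
      mul_smul]
    congr 1
    rw [show (((2 * Real.pi : ℝ)) : ℂ) = algebraMap ℝ ℂ (2 * Real.pi) from rfl, algebraMap_smul]
  have key2 := congrArg (fun v => (Complex.I)⁻¹ • v) key
  simp only [smul_smul, inv_mul_cancel₀ Complex.I_ne_zero, one_smul] at key2
  rw [← hInt, key2, hF0]

/-- Mean Value Formula at real points. -/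
theorem stmt_2 [MeasurableSpace H4] [BorelSpace H4]
    (Ω : Set H4) (hΩopen : IsOpen Ω) (hΩ : IsCircular Ω)
    (f : H4 → H4) (hf : IsSliceRegularOn Ω f)
    (a r : ℝ) (hr : 0 < r) (hball : Metric.closedBall ((a : H4)) r ⊆ Ω)
    (μ : Measure H4) [IsProbabilityMeasure μ] (hμS : μ Sphᶜ = 0)
    (hμinv : Measure.map (fun J : H4 => -J) μ = μ) :
    f (a : H4)
      = (2 * Real.pi)⁻¹ •
          ∫ I, (∫ θ in (0:ℝ)..(2 * Real.pi),
            f (((a + r * Real.cos θ : ℝ) : H4) + (r * Real.sin θ) • I)) ∂μ := by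
  have hπ : (2 * Real.pi) ≠ 0 := by positivity
  have hae : ∀ᵐ I ∂μ, I ^ 2 = -1 := by
    rw [MeasureTheory.ae_iff]
    simpa [Sph, Set.compl_def] using hμS
  have hconst : (∫ I, (∫ θ in (0:ℝ)..(2 * Real.pi),
        f (((a + r * Real.cos θ : ℝ) : H4) + (r * Real.sin θ) • I)) ∂μ)
      = ∫ _ : H4, ((2 * Real.pi) • f (a : H4)) ∂μ := by
    apply integral_congr_ae
    filter_upwards [hae] with I hi
    exact slice_mvp Ω hΩopen f hf.2.1 (fun x y J hJ hm => hf.2.2 x y J hJ hm) a r hr hball I hi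
  rw [hconst, integral_const]
  simp only [measure_univ, probReal_univ, ENNReal.toReal_one, one_smul]
  rw [smul_smul, inv_mul_cancel₀ hπ, one_smul]
end
end

section
/- Generalized Representation Formula: Let Ω ⊆ ℍ be a circular set, f : Ω → ℍ a slice function, and I, J, H ∈ 𝕊 with J ≠ I and H ≠ I (so that 1 + JI and 1 + HI are invertible in ℍ). Then for all x, y ∈ ℝ with x + yI ∈ Ω: ((1+JI)/2)⁻¹ f(x+yJ) − ((1+HI)/2)⁻¹ f(x+yH) = ( ((1+JI)/2)⁻¹((1−JI)/2) − ((1+HI)/2)⁻¹((1−HI)/2) ) f(x+yI). -/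
open Quaternion MeasureTheory Metric Filter

noncomputable section

/-- Generalized Representation Formula. -/
theorem stmt_4 (Ω : Set H4) (hΩ : IsCircular Ω) (f : H4 → H4) (hf : IsSliceOn Ω f)
    (I J H : H4) (hI : I ∈ Sph) (hJ : J ∈ Sph) (hH : H ∈ Sph)
    (hJI : J ≠ I) (hHI : H ≠ I) (x y : ℝ) (hx : (x : H4) + y • I ∈ Ω) :
    ((1 + J * I) / 2)⁻¹ * f ((x : H4) + y • J)
        - ((1 + H * I) / 2)⁻¹ * f ((x : H4) + y • H)
      = (((1 + J * I) / 2)⁻¹ * ((1 - J * I) / 2)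
          - ((1 + H * I) / 2)⁻¹ * ((1 - H * I) / 2)) * f ((x : H4) + y • I) := by
  have hIsq : I ^ 2 = -1 := hI
  have key : ∀ K : H4, K ∈ Sph → K ≠ I → (1 + K * I) / 2 ≠ 0 := by
    intro K hK hKI h0
    apply hKI
    have h1 : (1 + K * I) = 0 :=
      (div_eq_zero_iff.mp h0).resolve_right (by intro h; have := congrArg QuaternionAlgebra.re h; rw [show (2:H4) = ((2:ℝ):H4) by norm_cast] at this; simp at this)
    have h2 : K * I = -1 := eq_neg_of_add_eq_zero_right h1
    have h3 : K * I * I = -1 * I := by rw [h2]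
    rw [mul_assoc, ← pow_two, hIsq] at h3
    simpa using h3
  have ha := key J hJ hJI
  have hb := key H hH hHI
  have eqJ := hf x y I hI J hJ hx
  have eqH := hf x y I hI H hH hx
  rw [eqJ, eqH, mul_add, mul_add, ← mul_assoc, ← mul_assoc, ← mul_assoc, ← mul_assoc,
    inv_mul_cancel₀ ha, inv_mul_cancel₀ hb]
  simp only [one_mul]
  rw [sub_mul]
  abel
end
end

section
/- Fix I ∈ 𝕊 and for J ∈ 𝕊 with J ≠ I define R(J) = ((1+JI)/2)⁻¹ · ((1−JI)/2) ∈ ℍ. Then: (i) the map R : 𝕊 ∖ {I} → ℍ is injective; (ii) R(J) = 0 if and only if J = −I; (iii) |R(J)|² = (1 − r)/(1 + r) where r = Re(IJ), and consequently |R(J)| → +∞ as J → I. -/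
open Quaternion MeasureTheory Metric Filter

noncomputable section

namespace Stmt5Aux

lemma norm_sq_q (q : H4) : ‖q‖ ^ 2 = Quaternion.normSq q := by
  rw [sq, ← Quaternion.normSq_eq_norm_mul_self]

lemma norm_one_of_sph {q : H4} (hq : q ∈ Sph) : ‖q‖ = 1 := by
  have h2 : q ^ 2 = -1 := hq
  have : ‖q‖ ^ 2 = 1 := by
    have := congrArg (fun x : H4 => ‖x‖) h2
    simpa [norm_pow] using this
  nlinarith [norm_nonneg q]

lemma ne_zero_of_sph {q : H4} (hq : q ∈ Sph) : q ≠ 0 := by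
  have := norm_one_of_sph hq
  intro h; rw [h] at this; simp at this

lemma inv_of_sph {q : H4} (hq : q ∈ Sph) : q⁻¹ = -q := by
  have h2 : q ^ 2 = -1 := hq
  have : q * (-q) = 1 := by rw [mul_neg, ← sq, h2, neg_neg]
  exact inv_eq_of_mul_eq_one_right this

lemma mul_eq_neg_one_iff_left {I J : H4} (hI : I ∈ Sph) :
    J * I = -1 ↔ J = I := by
  constructor
  · intro h
    have hI0 := ne_zero_of_sph hI
    have := congrArg (fun x => x * I⁻¹) h
    simp only [mul_inv_cancel_right₀ hI0] at this
    rw [this, inv_of_sph hI, neg_mul, one_mul, neg_neg]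
  · intro h
    have h2 : I ^ 2 = -1 := hI
    rw [h, ← sq, h2]

lemma mul_eq_neg_one_iff_right {I J : H4} (hI : I ∈ Sph) :
    I * J = -1 ↔ J = I := by
  constructor
  · intro h
    have hI0 := ne_zero_of_sph hI
    have := congrArg (fun x => I⁻¹ * x) h
    simp only [inv_mul_cancel_left₀ hI0] at this
    rw [this, inv_of_sph hI]; simp
  · intro h
    have h2 : I ^ 2 = -1 := hI
    rw [h, ← sq, h2]

lemma one_add_ne {I J : H4} (hI : I ∈ Sph) (hJ : J ≠ I) : 1 + J * I ≠ 0 := by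
  intro h
  exact hJ ((mul_eq_neg_one_iff_left hI).mp (eq_neg_of_add_eq_zero_right h))

lemma R_eq {I J : H4} (hI : I ∈ Sph) (hJ : J ≠ I) :
    ((1 + J * I) / 2)⁻¹ * ((1 - J * I) / 2) = ((1 + J * I) / 2)⁻¹ - 1 := by
  have h2 : (2 : H4) ≠ 0 := by
    intro h
    have h' := congrArg QuaternionAlgebra.re h
    rw [show ((2:H4)).re = 2 from rfl, Quaternion.re_zero] at h'
    norm_num at h'
  have ha : ((1 + J * I) / 2 : H4) ≠ 0 :=
    div_ne_zero (one_add_ne hI hJ) h2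
  have hb : ((1 - J * I) / 2 : H4) = 1 - (1 + J * I) / 2 := by
    rw [eq_sub_iff_add_eq, ← add_div]
    rw [show (1 - J * I + (1 + J * I) : H4) = 2 by noncomm_ring; rw [two_smul]; exact one_add_one_eq_two, div_self h2]
  rw [hb, mul_sub, mul_one, inv_mul_cancel₀ ha]

lemma normSq_one_add (w : H4) :
    Quaternion.normSq (1 + w) = 1 + 2 * w.re + Quaternion.normSq w := by
  simp [Quaternion.normSq_def']; ring

lemma normSq_one_sub (w : H4) :
    Quaternion.normSq (1 - w) = 1 - 2 * w.re + Quaternion.normSq w := by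
  simp [Quaternion.normSq_def']; ring

lemma re_mul_comm (a b : H4) : (a * b).re = (b * a).re := by
  simp [Quaternion.re_mul]; ring

lemma re_gt_neg_one {q : H4} (h1 : ‖q‖ = 1) (h2 : q ≠ -1) : -1 < q.re := by
  have hn : q.re ^ 2 + q.imI ^ 2 + q.imJ ^ 2 + q.imK ^ 2 = 1 := by
    have := Quaternion.normSq_def' q
    rw [← norm_sq_q, h1] at this
    simpa using this.symm
  rcases lt_or_ge (-1) q.re with h | h
  · exact h
  exfalso
  apply h2
  have hre : q.re = -1 := by
    nlinarith [sq_nonneg q.imI, sq_nonneg q.imJ, sq_nonneg q.imK]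
  have hi : q.imI = 0 := by nlinarith [sq_nonneg q.imJ, sq_nonneg q.imK]
  have hj : q.imJ = 0 := by nlinarith [sq_nonneg q.imK]
  have hk : q.imK = 0 := by nlinarith
  ext <;> simp [hre, hi, hj, hk]

lemma tendsto_sqrt_atTop : Tendsto Real.sqrt atTop atTop := by
  rw [tendsto_atTop_atTop]
  intro b
  refine ⟨b ^ 2, fun a ha => ?_⟩
  calc b ≤ |b| := le_abs_self b
    _ = Real.sqrt (b ^ 2) := (Real.sqrt_sq_eq_abs b).symm
    _ ≤ Real.sqrt a := Real.sqrt_le_sqrt ha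

end Stmt5Aux

namespace Stmt5Aux

lemma two_ne : (2 : H4) ≠ 0 := by
  intro h
  have h' := congrArg QuaternionAlgebra.re h
  rw [show ((2:H4)).re = 2 from rfl, Quaternion.re_zero] at h'
  norm_num at h'

lemma normSq_two : Quaternion.normSq (2:H4) = 4 := by
  rw [show (2:H4) = 1 + 1 from one_add_one_eq_two.symm, normSq_one_add]
  simp
  norm_num

lemma mul_eq_one_iff {I J : H4} (hI : I ∈ Sph) : J * I = 1 ↔ J = -I := by
  constructor
  · intro h
    rw [eq_inv_of_mul_eq_one_left h, inv_of_sph hI]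
  · intro h
    have h2 : I ^ 2 = -1 := hI
    rw [h, neg_mul, ← sq, h2, neg_neg]

lemma norm_R {I J : H4} (hI : I ∈ Sph) (hJS : J ∈ Sph) (hJ : J ≠ I) :
    ‖((1 + J * I) / 2)⁻¹ * ((1 - J * I) / 2)‖ ^ 2
      = (1 - (I * J).re) / (1 + (I * J).re) := by
  set r := (I * J).re with hr
  have hwre : (J * I).re = r := re_mul_comm J I
  have hw : Quaternion.normSq (J * I) = 1 := by
    rw [map_mul, ← norm_sq_q, ← norm_sq_q, norm_one_of_sph hJS, norm_one_of_sph hI]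
    norm_num
  rw [norm_sq_q, map_mul, map_inv₀, map_div₀, map_div₀, normSq_two,
      normSq_one_add, normSq_one_sub, hwre, hw]
  rcases eq_or_ne (1 + r) 0 with h | h
  · rw [h, div_zero, show (1:ℝ) + 2*r + 1 = 0 by linarith]
    norm_num
  · have h' : (1:ℝ) + 2*r + 1 ≠ 0 := fun hc => h (by linarith)
    field_simp
    ring

end Stmt5Aux

/-- Properties of the map R(J) = ((1+JI)/2)⁻¹ ((1−JI)/2). -/
theorem stmt_5 (I : H4) (hI : I ∈ Sph) (R : H4 → H4)
    (hR : ∀ J, R J = ((1 + J * I) / 2)⁻¹ * ((1 - J * I) / 2)) :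
    Set.InjOn R (Sph \ {I}) ∧
    (∀ J ∈ Sph \ {I}, (R J = 0 ↔ J = -I)) ∧
    (∀ J ∈ Sph \ {I}, ‖R J‖ ^ 2 = (1 - (I * J).re) / (1 + (I * J).re)) ∧
    Filter.Tendsto (fun J => ‖R J‖) (nhdsWithin I (Sph \ {I})) Filter.atTop := by
  have hI0 : I ≠ 0 := Stmt5Aux.ne_zero_of_sph hI
  have hI2 : I ^ 2 = -1 := hI
  have hp3 : ∀ J ∈ Sph \ {I}, ‖R J‖ ^ 2 = (1 - (I * J).re) / (1 + (I * J).re) := by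
    intro J hJ
    rw [hR J]
    exact Stmt5Aux.norm_R hI hJ.1 hJ.2
  refine ⟨?_, ?_, hp3, ?_⟩
  · intro J1 hJ1 J2 hJ2 heq
    have hne1 : J1 ≠ I := hJ1.2
    have hne2 : J2 ≠ I := hJ2.2
    rw [hR J1, hR J2, Stmt5Aux.R_eq hI hne1, Stmt5Aux.R_eq hI hne2, sub_left_inj] at heq
    have h1 : ((1 + J1 * I) / 2 : H4) = (1 + J2 * I) / 2 := inv_injective heq
    have h2 : (1 + J1 * I : H4) = 1 + J2 * I :=
      mul_right_cancel₀ (inv_ne_zero Stmt5Aux.two_ne)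
        (by simpa [div_eq_mul_inv] using h1)
    have h3 : (J1 * I : H4) = J2 * I := by
      have := congrArg (fun x => x - 1) h2
      simpa using this
    exact mul_right_cancel₀ hI0 h3
  · intro J hJ
    have hne : J ≠ I := hJ.2
    rw [hR J, Stmt5Aux.R_eq hI hne, sub_eq_zero, inv_eq_one,
      div_eq_one_iff_eq Stmt5Aux.two_ne]
    constructor
    · intro h
      have h1 : (J * I : H4) = 2 - 1 := eq_sub_of_add_eq' h
      rw [show (2 - 1 : H4) = 1 from by rw [← one_add_one_eq_two]; noncomm_ring] at h1
      exact (Stmt5Aux.mul_eq_one_iff hI).mp h1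
    · intro h
      have h1 : J * I = 1 := (Stmt5Aux.mul_eq_one_iff hI).mpr h
      rw [h1, one_add_one_eq_two]
  · have hrt : Tendsto (fun J : H4 => (I * J).re) (nhdsWithin I (Sph \ {I})) (nhds (-1)) := by
      have hc : Continuous fun J : H4 => (I * J).re :=
        Quaternion.continuous_re.comp (continuous_const.mul continuous_id)
      have ht := (hc.tendsto I).mono_left (nhdsWithin_le_nhds (s := Sph \ {I}))
      have : (I * I).re = -1 := by rw [← sq, hI2]; simp
      rwa [this] at ht
    have hpos : ∀ᶠ J in nhdsWithin I (Sph \ {I}), 0 < 1 + (I * J).re := by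
      filter_upwards [eventually_mem_nhdsWithin] with J hJ
      have h1 : ‖I * J‖ = 1 := by
        rw [norm_mul, Stmt5Aux.norm_one_of_sph hI, Stmt5Aux.norm_one_of_sph hJ.1, mul_one]
      have hne : I * J ≠ -1 := fun h => hJ.2 ((Stmt5Aux.mul_eq_neg_one_iff_right hI).mp h)
      linarith [Stmt5Aux.re_gt_neg_one h1 hne]
    have h0 : Tendsto (fun J : H4 => 1 + (I * J).re) (nhdsWithin I (Sph \ {I}))
        (nhdsWithin 0 (Set.Ioi 0)) := by
      rw [tendsto_nhdsWithin_iff]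
      constructor
      · have := tendsto_const_nhds.add hrt (f := fun _ : H4 => (1:ℝ))
        simpa using this
      · simpa [Set.mem_Ioi] using hpos
    have hinv : Tendsto (fun J : H4 => (1 + (I * J).re)⁻¹) (nhdsWithin I (Sph \ {I})) atTop := by
      have := tendsto_inv_nhdsGT_zero.comp h0
      simpa [Function.comp_def] using this
    have hnum : Tendsto (fun J : H4 => 1 - (I * J).re) (nhdsWithin I (Sph \ {I})) (nhds 2) := by
      have := tendsto_const_nhds.sub hrt (f := fun _ : H4 => (1:ℝ))
      rwa [show (1:ℝ) - -1 = 2 by norm_num] at this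
    have hdiv : Tendsto (fun J : H4 => (1 - (I * J).re) / (1 + (I * J).re))
        (nhdsWithin I (Sph \ {I})) atTop := by
      simp only [div_eq_mul_inv]
      exact Filter.Tendsto.pos_mul_atTop two_pos hnum hinv
    have hsqrt := Stmt5Aux.tendsto_sqrt_atTop.comp hdiv
    refine hsqrt.congr' ?_
    filter_upwards [eventually_mem_nhdsWithin] with J hJ
    have h3 := hp3 J hJ
    simp only [Function.comp_apply]
    rw [← h3, Real.sqrt_sq (norm_nonneg _)]
end
end

section
/- Fix I ∈ 𝕊. Then there exists a continuous map M = (M₁, M₂) : (𝕊 × 𝕊) ∖ D_𝕊 → ℍ × ℍ, where D_𝕊 = {(q,q) : q ∈ 𝕊} is the diagonal, such that for every slice regular function f : ℍ → ℍ, all x, y ∈ ℝ and all J, H ∈ 𝕊 with J ≠ H, one has f(x+yI) = M₁(J,H)·f(x+yJ) + M₂(J,H)·f(x+yH). -/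
open Quaternion MeasureTheory Metric Filter

noncomputable section

lemma stmt6_half_mul (x y : H4) : x / 2 * y = x * y / 2 := by
  have h2' : Commute (2:H4) y := by
    rw [(by norm_num : (2:H4) = 1 + 1)]
    exact Commute.add_left (Commute.one_left y) (Commute.one_left y)
  have h2 : Commute ((2:H4))⁻¹ y := h2'.inv_left₀
  rw [div_eq_mul_inv, div_eq_mul_inv, mul_assoc, mul_assoc, h2.eq]

lemma stmt6_key (a b I J H c : H4) (hI2 : I * I = -1) (hc : c * (J - H) = 1) :
    (1 + (I - J) * c) * ((1 - J * I) / 2 * a + (1 + J * I) / 2 * b)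
      + (-((I - J) * c)) * ((1 - H * I) / 2 * a + (1 + H * I) / 2 * b) = a := by
  have h1 : ∀ K : H4, (1 - K * I) / 2 * a + (1 + K * I) / 2 * b
      = (a + b + K * (I * (b - a))) / 2 := by
    intro K
    rw [stmt6_half_mul, stmt6_half_mul, ← add_div]
    congr 1
    noncomm_ring
  rw [h1 J, h1 H, ← mul_div_assoc, ← mul_div_assoc, ← add_div]
  have e1 : (1 + (I - J) * c) * (a + b + J * (I * (b - a)))
      + (-((I - J) * c)) * (a + b + H * (I * (b - a)))
      = (a + b + J * (I * (b - a))) + (I - J) * c * ((J - H) * (I * (b - a))) := by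
    noncomm_ring
  rw [e1, mul_assoc (I - J) c, ← mul_assoc c, hc, one_mul]
  have e2 : (I - J) * (I * (b - a)) = I * I * (b - a) - J * (I * (b - a)) := by
    noncomm_ring
  rw [e2, hI2]
  have e3 : a + b + J * (I * (b - a)) + (-1 * (b - a) - J * (I * (b - a))) = a * 2 := by
    noncomm_ring
  rw [e3]
  refine mul_div_cancel_right₀ a (fun h => ?_)
  have h4 := congrArg QuaternionAlgebra.re h
  rw [show (2:H4) = ((2:ℕ):H4) by norm_cast, ← Quaternion.coe_natCast, Quaternion.re_coe] at h4
  norm_num at h4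

/-- a continuous two-point representation kernel. -/
theorem stmt_6 (I : H4) (hI : I ∈ Sph) :
    ∃ M₁ M₂ : H4 → H4 → H4,
      ContinuousOn (fun p : H4 × H4 => (M₁ p.1 p.2, M₂ p.1 p.2))
        {p : H4 × H4 | p.1 ∈ Sph ∧ p.2 ∈ Sph ∧ p.1 ≠ p.2} ∧
      ∀ f : H4 → H4, IsSliceRegularOn Set.univ f →
        ∀ (x y : ℝ), ∀ J ∈ Sph, ∀ H ∈ Sph, J ≠ H →
          f ((x : H4) + y • I)
            = M₁ J H * f ((x : H4) + y • J) + M₂ J H * f ((x : H4) + y • H) := by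
  refine ⟨fun J K => 1 + (I - J) * (J - K)⁻¹, fun J K => -((I - J) * (J - K)⁻¹), ?_, ?_⟩
  · have hinv : ContinuousOn (fun p : H4 × H4 => (p.1 - p.2)⁻¹)
        {p : H4 × H4 | p.1 ∈ Sph ∧ p.2 ∈ Sph ∧ p.1 ≠ p.2} :=
      (continuous_fst.sub continuous_snd).continuousOn.inv₀
        (fun p hp => sub_ne_zero.mpr hp.2.2)
    have hm : ContinuousOn (fun p : H4 × H4 => (I - p.1) * (p.1 - p.2)⁻¹)
        {p : H4 × H4 | p.1 ∈ Sph ∧ p.2 ∈ Sph ∧ p.1 ≠ p.2} :=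
      ((continuous_const.sub continuous_fst).continuousOn).mul hinv
    exact (continuousOn_const.add hm).prodMk hm.neg
  · intro f hf x y J hJ K hK hne
    have hI2 : I * I = -1 := by
      have := hI
      simpa [Sph, sq] using this
    have hc : (J - K)⁻¹ * (J - K) = 1 := inv_mul_cancel₀ (sub_ne_zero.mpr hne)
    have hJrep := hf.1 x y I hI J hJ (Set.mem_univ _)
    have hKrep := hf.1 x y I hI K hK (Set.mem_univ _)
    rw [hJrep, hKrep]
    exact (stmt6_key (f ((x : H4) + y • I)) (f ((x : H4) - y • I)) I J K (J - K)⁻¹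
      hI2 hc).symm
end
end

section
/- Liouville-type theorem: Let f : ℍ → ℍ be a C² slice function which is bounded and satisfies Δ_* f ≡ 0, i.e. for every I ∈ 𝕊 the function (x,y) ↦ f(x+yI) from ℝ² to ℍ is harmonic. Then f is constant. -/
open Quaternion MeasureTheory Metric Filter

noncomputable section

/-- Liouville theorem for bounded harmonic functions on ℂ. -/
lemma harmLiouville (u : ℂ → ℝ) (hu : ContDiff ℝ 2 u) (C : ℝ) (hb : ∀ z, |u z| ≤ C)
    (hh : ∀ z : ℂ, fderiv ℝ (fun w => fderiv ℝ u w 1) z 1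
      + fderiv ℝ (fun w => fderiv ℝ u w Complex.I) z Complex.I = 0) :
    ∀ z, u z = u 0 := by
  have hud : Differentiable ℝ u := hu.differentiable two_ne_zero
  have hu' : ContDiff ℝ 1 (fderiv ℝ u) := hu.fderiv_right (by norm_num)
  have hu'd : Differentiable ℝ (fderiv ℝ u) := hu'.differentiable one_ne_zero
  set f'' : ℂ → ℂ →L[ℝ] ℂ →L[ℝ] ℝ := fun z => fderiv ℝ (fderiv ℝ u) z with hf''def
  have happ : ∀ (v : ℂ) (z w : ℂ), fderiv ℝ (fun p => fderiv ℝ u p v) z w = f'' z w v := by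
    intro v z w
    have h1 : (fun p => fderiv ℝ u p v) = (ContinuousLinearMap.apply ℝ ℝ v) ∘ (fderiv ℝ u) := rfl
    rw [h1, fderiv_comp z (ContinuousLinearMap.apply ℝ ℝ v).differentiableAt (hu'd z),
        ContinuousLinearMap.fderiv]
    rfl
  have hsym : ∀ z : ℂ, ∀ v w, f'' z v w = f'' z w v := fun z =>
    (hu.contDiffAt.isSymmSndFDerivAt (by simp))
  have hharm : ∀ z, f'' z 1 1 + f'' z Complex.I Complex.I = 0 := by
    intro z
    have h := hh z
    rwa [happ 1 z 1, happ Complex.I z Complex.I] at h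
  set F : ℂ → ℂ := fun z =>
    (fderiv ℝ u z 1 : ℂ) - (fderiv ℝ u z Complex.I : ℂ) * Complex.I with hFdef
  -- F is entire
  have hFd : ∀ z, HasDerivAt F ((f'' z 1 1 : ℂ) - (f'' z 1 Complex.I : ℂ) * Complex.I) z := by
    intro z
    set c : ℂ := (f'' z 1 1 : ℂ) - (f'' z 1 Complex.I : ℂ) * Complex.I with hc
    have d1 : HasFDerivAt (fun p => fderiv ℝ u p 1)
        ((ContinuousLinearMap.apply ℝ ℝ (1:ℂ)).comp (f'' z)) z :=
      (ContinuousLinearMap.apply ℝ ℝ (1:ℂ)).hasFDerivAt.comp z (hu'd z).hasFDerivAt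
    have dI : HasFDerivAt (fun p => fderiv ℝ u p Complex.I)
        ((ContinuousLinearMap.apply ℝ ℝ Complex.I).comp (f'' z)) z :=
      (ContinuousLinearMap.apply ℝ ℝ Complex.I).hasFDerivAt.comp z (hu'd z).hasFDerivAt
    have hM := ((Complex.ofRealCLM.hasFDerivAt.comp z d1).sub
      ((Complex.ofRealCLM.hasFDerivAt.comp z dI).mul_const Complex.I))
    set M := (Complex.ofRealCLM.comp ((ContinuousLinearMap.apply ℝ ℝ (1:ℂ)).comp (f'' z))) -
      Complex.I • (Complex.ofRealCLM.comp ((ContinuousLinearMap.apply ℝ ℝ Complex.I).comp (f'' z)))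
      with hMdef
    have hM' : HasFDerivAt F M z := hM
    have hMval : ∀ v, M v = ((f'' z v 1 : ℝ) : ℂ) - ((f'' z v Complex.I : ℝ) : ℂ) * Complex.I := by
      intro v
      simp [hMdef, smul_eq_mul, mul_comm]
    have hlin : ∀ v : ℂ, M v = v * c := by
      intro v
      have hv : v = v.re • (1:ℂ) + v.im • Complex.I := by
        simp [Complex.real_smul, Complex.ext_iff]
      rw [hv, M.map_add, M.map_smul, M.map_smul, hMval 1, hMval Complex.I]
      have h1 : f'' z Complex.I 1 = f'' z 1 Complex.I := hsym z Complex.I 1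
      have h2 : f'' z Complex.I Complex.I = - f'' z 1 1 := by linarith [hharm z]
      rw [h1, h2, hc]
      simp only [Complex.real_smul]
      push_cast
      ring_nf
      simp only [Complex.I_sq]
      ring
    have hgoal : HasDerivAt F c z := by
      rw [hasDerivAt_iff_isLittleO_nhds_zero]
      have h := hasFDerivAt_iff_isLittleO_nhds_zero.mp hM'
      simpa only [hlin, smul_eq_mul] using h
    exact hgoal
  have hFdiff : Differentiable ℂ F := fun z => (hFd z).differentiableAt
  have hFsm : ContDiff ℂ 2 F := hFdiff.contDiff
  have hFc : Continuous F := hFdiff.continuous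
  have hF'c : Continuous (deriv F) := hFsm.continuous_deriv (by norm_num)
  -- primitive of F
  set G : ℂ → ℂ := fun z => ∫ t in (0:ℝ)..1, F ((t:ℂ) * z) * z with hGdef
  have hGd : ∀ z₀ : ℂ, HasDerivAt G (F z₀) z₀ := by
    intro z₀
    obtain ⟨M₁, hM₁⟩ := (isCompact_closedBall (0:ℂ) (‖z₀‖+1)).exists_bound_of_continuousOn
      hFc.continuousOn
    obtain ⟨M₂, hM₂⟩ := (isCompact_closedBall (0:ℂ) (‖z₀‖+1)).exists_bound_of_continuousOn
      hF'c.continuousOn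
    have hmem : ∀ t : ℝ, t ∈ Set.uIoc (0:ℝ) 1 → ∀ x ∈ ball z₀ 1,
        ((t:ℂ) * x ∈ closedBall (0:ℂ) (‖z₀‖+1) ∧ ‖x‖ ≤ ‖z₀‖ + 1 ∧ |t| ≤ 1) := by
      intro t ht x hx
      rw [Set.uIoc_of_le zero_le_one] at ht
      have ht0 : 0 < t := ht.1
      have ht1 : t ≤ 1 := ht.2
      have hxn : ‖x‖ ≤ ‖z₀‖ + 1 := by
        have := mem_ball_iff_norm.mp hx
        calc ‖x‖ = ‖z₀ + (x - z₀)‖ := by ring_nf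
          _ ≤ ‖z₀‖ + ‖x - z₀‖ := norm_add_le _ _
          _ ≤ ‖z₀‖ + 1 := by linarith
      refine ⟨?_, hxn, by rw [abs_of_pos ht0]; exact ht1⟩
      rw [mem_closedBall_zero_iff]
      calc ‖(t:ℂ) * x‖ = |t| * ‖x‖ := by
            rw [norm_mul, Complex.norm_real, Real.norm_eq_abs]
        _ ≤ 1 * (‖z₀‖ + 1) := by
            apply mul_le_mul (by rw [abs_of_pos ht0]; exact ht1) hxn (norm_nonneg _) zero_le_one
        _ = ‖z₀‖ + 1 := one_mul _
    have key := intervalIntegral.hasDerivAt_integral_of_dominated_loc_of_deriv_le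
      (F := fun (x : ℂ) (t : ℝ) => F ((t:ℂ) * x) * x)
      (F' := fun (x : ℂ) (t : ℝ) => deriv F ((t:ℂ) * x) * (t:ℂ) * x + F ((t:ℂ) * x) * 1)
      (x₀ := z₀) (a := 0) (b := 1) (μ := MeasureTheory.volume) (bound := fun _ => M₂ * (‖z₀‖ + 1) + M₁)
      (s := ball z₀ 1) (ball_mem_nhds z₀ one_pos) ?meas ?int ?meas' ?bnd ?bint ?dif
    case meas =>
      filter_upwards with x
      exact (((hFc.comp (Complex.continuous_ofReal.mul continuous_const)).mul
        continuous_const)).aestronglyMeasurable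
    case int =>
      exact ((hFc.comp (Complex.continuous_ofReal.mul continuous_const)).mul
        continuous_const).intervalIntegrable 0 1
    case meas' =>
      apply Continuous.aestronglyMeasurable
      apply Continuous.add
      · exact ((hF'c.comp (Complex.continuous_ofReal.mul continuous_const)).mul
          Complex.continuous_ofReal).mul continuous_const
      · exact (hFc.comp (Complex.continuous_ofReal.mul continuous_const)).mul continuous_const
    case bnd =>
      filter_upwards with t ht x hx
      obtain ⟨hmem1, hxn, htabs⟩ := hmem t ht x hx
      have hb1 : ‖deriv F ((t:ℂ) * x) * (t:ℂ) * x‖ ≤ M₂ * (‖z₀‖ + 1) := by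
        rw [norm_mul, norm_mul, Complex.norm_real, Real.norm_eq_abs]
        have h1 : ‖deriv F ((t:ℂ)*x)‖ ≤ M₂ := hM₂ _ hmem1
        have h2 : (0:ℝ) ≤ M₂ := le_trans (norm_nonneg _) h1
        calc ‖deriv F ((t:ℂ)*x)‖ * |t| * ‖x‖ ≤ M₂ * 1 * (‖z₀‖+1) := by
              apply mul_le_mul _ hxn (norm_nonneg _) (by positivity)
              exact mul_le_mul h1 htabs (abs_nonneg _) h2
          _ = M₂ * (‖z₀‖+1) := by ring
      have hb2 : ‖F ((t:ℂ) * x) * 1‖ ≤ M₁ := by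
        rw [mul_one]; exact hM₁ _ hmem1
      calc ‖deriv F ((t:ℂ) * x) * (t:ℂ) * x + F ((t:ℂ) * x) * 1‖
          ≤ ‖deriv F ((t:ℂ) * x) * (t:ℂ) * x‖ + ‖F ((t:ℂ) * x) * 1‖ := norm_add_le _ _
        _ ≤ M₂ * (‖z₀‖ + 1) + M₁ := add_le_add hb1 hb2
    case bint => exact intervalIntegrable_const
    case dif =>
      filter_upwards with t ht x hx
      have h1 : HasDerivAt (fun x : ℂ => (t:ℂ) * x) ((t:ℂ)) x := by
        simpa using (hasDerivAt_id x).const_mul (t:ℂ)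
      have h2 : HasDerivAt (fun x : ℂ => F ((t:ℂ) * x)) (deriv F ((t:ℂ)*x) * (t:ℂ)) x :=
        HasDerivAt.comp x (hFdiff _).hasDerivAt h1
      exact h2.mul (hasDerivAt_id' x)
    obtain ⟨-, hkey⟩ := key
    have hFTC : (∫ t in (0:ℝ)..1,
        (deriv F ((t:ℂ)*z₀) * (t:ℂ) * z₀ + F ((t:ℂ)*z₀) * 1)) = F z₀ := by
      have hder : ∀ t ∈ Set.uIcc (0:ℝ) 1, HasDerivAt (fun s : ℝ => (s:ℂ) * F ((s:ℂ) * z₀))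
          (deriv F ((t:ℂ)*z₀) * (t:ℂ) * z₀ + F ((t:ℂ)*z₀) * 1) t := by
        intro t _
        have hs : HasDerivAt (fun s : ℝ => (s:ℂ)) 1 t := by
          simpa using (hasDerivAt_id t).ofReal_comp
        have hz : HasDerivAt (fun w : ℂ => F (w * z₀)) (deriv F ((t:ℂ)*z₀) * z₀) (t:ℂ) := by
          have h := HasDerivAt.comp (t:ℂ) (hFdiff ((t:ℂ)*z₀)).hasDerivAt
            ((hasDerivAt_id ((t:ℂ))).mul_const z₀)
          simpa [Function.comp_def] using h
        have h2 : HasDerivAt (fun s : ℝ => F ((s:ℂ) * z₀)) (deriv F ((t:ℂ)*z₀) * z₀) t :=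
          hz.comp_ofReal
        have h3 := hs.mul h2
        convert h3 using 1
        · rfl
        · rfl
        · ring
      have hint : IntervalIntegrable
          (fun t : ℝ => deriv F ((t:ℂ)*z₀) * (t:ℂ) * z₀ + F ((t:ℂ)*z₀) * 1) MeasureTheory.volume 0 1 := by
        apply Continuous.intervalIntegrable
        apply Continuous.add
        · exact ((hF'c.comp (Complex.continuous_ofReal.mul continuous_const)).mul
            Complex.continuous_ofReal).mul continuous_const
        · exact (hFc.comp (Complex.continuous_ofReal.mul continuous_const)).mul continuous_const
      have h := intervalIntegral.integral_eq_sub_of_hasDerivAt hder hint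
      simpa using h
    rw [hFTC] at hkey
    exact hkey
  have hGdiff : Differentiable ℂ G := fun z => (hGd z).differentiableAt
  have hG0 : G 0 = 0 := by simp [hGdef]
  -- Re G = u - u 0
  have hFre : ∀ z, (F z).re = fderiv ℝ u z 1 := by intro z; simp [hFdef]
  have hFim : ∀ z, (F z).im = -(fderiv ℝ u z Complex.I) := by intro z; simp [hFdef]
  have hsub : ∀ z w : ℂ, u z - (G z).re = u w - (G w).re := by
    have hfd : ∀ z, HasFDerivAt (fun w => u w - (G w).re) (0 : ℂ →L[ℝ] ℝ) z := by
      intro z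
      have hGre : HasFDerivAt (fun w => (G w).re)
          (Complex.reCLM.comp
            ((ContinuousLinearMap.smulRight (1 : ℂ →L[ℂ] ℂ) (F z)).restrictScalars ℝ)) z :=
        Complex.reCLM.hasFDerivAt.comp z (((hGd z).hasFDerivAt).restrictScalars ℝ)
      have husub := ((hud z).hasFDerivAt).sub hGre
      have hzero : (fderiv ℝ u z) - (Complex.reCLM.comp
          ((ContinuousLinearMap.smulRight (1 : ℂ →L[ℂ] ℂ) (F z)).restrictScalars ℝ)) = 0 := by
        apply ContinuousLinearMap.ext
        intro v
        have hv : v = v.re • (1:ℂ) + v.im • Complex.I := by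
          simp [Complex.real_smul, Complex.ext_iff]
        have hval : ∀ w : ℂ, (Complex.reCLM.comp
            ((ContinuousLinearMap.smulRight (1 : ℂ →L[ℂ] ℂ) (F z)).restrictScalars ℝ)) w
            = (w * F z).re := by
          intro w
          simp [smul_eq_mul]
        rw [ContinuousLinearMap.sub_apply, hv]
        simp only [map_add, _root_.map_smul, smul_eq_mul, hval, ContinuousLinearMap.zero_apply]
        have e1 : ((1:ℂ) * F z).re = fderiv ℝ u z 1 := by rw [one_mul]; exact hFre z
        have e2 : (Complex.I * F z).re = fderiv ℝ u z Complex.I := by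
          simp [Complex.mul_re, hFim z]
        rw [add_mul, smul_mul_assoc, smul_mul_assoc, one_mul, Complex.add_re,
          Complex.smul_re, Complex.smul_re, e2, hFre z]
        simp only [smul_eq_mul]
        ring
      rw [hzero] at husub
      exact husub
    intro z w
    exact is_const_of_fderiv_eq_zero (fun p => ((hfd p).differentiableAt))
      (fun p => (hfd p).fderiv) z w
  have hre : ∀ z, (G z).re = u z - u 0 := by
    intro z
    have := hsub z 0
    rw [hG0] at this
    simp at this
    linarith
  -- Liouville for exp ∘ G
  have hexp : Differentiable ℂ (fun z => Complex.exp (G z)) :=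
    Complex.differentiable_exp.comp hGdiff
  have hbd2 : ∀ z, ‖Complex.exp (G z)‖ ≤ Real.exp (C + |u 0|) := by
    intro z
    rw [Complex.norm_exp, hre z]
    apply Real.exp_le_exp.mpr
    have h1 := hb z
    have h2 := abs_le.mp h1
    have h3 := abs_le.mp (le_refl |u 0|)
    cases' abs_cases (u 0) with h h <;> linarith [h2.1, h2.2]
  have hcst : ∀ z, Complex.exp (G z) = Complex.exp (G 0) := by
    intro z
    apply hexp.apply_eq_apply_of_bounded
    exact isBounded_iff_forall_norm_le.mpr ⟨Real.exp (C + |u 0|), by rintro w ⟨p, rfl⟩; exact hbd2 p⟩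
  intro z
  have h1 : Complex.exp (G z) = 1 := by rw [hcst z, hG0, Complex.exp_zero]
  have h2 : Real.exp ((G z).re) = 1 := by
    have := congrArg norm h1
    rwa [Complex.norm_exp, norm_one] at this
  have h3 : (G z).re = 0 := Real.exp_eq_exp.mp (by rw [h2, Real.exp_zero])
  rw [hre z] at h3
  linarith


/-- Every quaternion lies on some slice. -/
lemma quat_decomp (q : H4) : ∃ I ∈ Sph, ∃ z : ℂ, q = ((z.re : H4) + z.im • I) := by
  by_cases h0 : q.imI = 0 ∧ q.imJ = 0 ∧ q.imK = 0
  · refine ⟨⟨0,1,0,0⟩, ?_, (q.re : ℂ), ?_⟩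
    · show (⟨0,1,0,0⟩ : H4) ^ 2 = -1
      erw [sq]
      ext <;> simp [Quaternion.re_mul, Quaternion.imI_mul, Quaternion.imJ_mul,
        Quaternion.imK_mul]
    · simp only [Complex.ofReal_re, Complex.ofReal_im, zero_smul, add_zero]
      erw [zero_smul, add_zero]
      ext <;> simp [h0.1, h0.2.1, h0.2.2]
  · set y : ℝ := Real.sqrt (q.imI^2 + q.imJ^2 + q.imK^2) with hydef
    have hsum : 0 < q.imI^2 + q.imJ^2 + q.imK^2 := by
      have h : q.imI ≠ 0 ∨ q.imJ ≠ 0 ∨ q.imK ≠ 0 := by tauto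
      rcases h with h|h|h <;> positivity
    have hy0 : 0 < y := Real.sqrt_pos.mpr hsum
    have hy2 : y^2 = q.imI^2 + q.imJ^2 + q.imK^2 := Real.sq_sqrt hsum.le
    set I : H4 := ⟨0, q.imI / y, q.imJ / y, q.imK / y⟩ with hIdef
    have hre : I.re = 0 := rfl
    have hi : I.imI = q.imI / y := rfl
    have hj : I.imJ = q.imJ / y := rfl
    have hk : I.imK = q.imK / y := rfl
    have hyne : y ≠ 0 := ne_of_gt hy0
    refine ⟨I, ?_, (⟨q.re, y⟩ : ℂ), ?_⟩
    · show I ^ 2 = -1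
      rw [sq]
      ext
      · rw [Quaternion.re_mul, hre, hi, hj, hk]
        have h1 : (-1 : H4).re = -1 := by simp
        rw [h1]
        field_simp
        nlinarith [hy2]
      · rw [Quaternion.imI_mul, hre, hi, hj, hk]
        have h1 : (-1 : H4).imI = 0 := by simp
        rw [h1]
        ring
      · rw [Quaternion.imJ_mul, hre, hi, hj, hk]
        have h1 : (-1 : H4).imJ = 0 := by simp
        rw [h1]
        ring
      · rw [Quaternion.imK_mul, hre, hi, hj, hk]
        have h1 : (-1 : H4).imK = 0 := by simp
        rw [h1]
        ring
    · show q = ((q.re : ℝ) : H4) + y • I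
      ext
      · rw [Quaternion.re_add, Quaternion.re_coe, Quaternion.re_smul, hre]
        simp
      · rw [Quaternion.imI_add, Quaternion.imI_coe, Quaternion.imI_smul, hi,
          smul_eq_mul, mul_div_cancel₀ _ hyne, zero_add]
      · rw [Quaternion.imJ_add, Quaternion.imJ_coe, Quaternion.imJ_smul, hj,
          smul_eq_mul, mul_div_cancel₀ _ hyne, zero_add]
      · rw [Quaternion.imK_add, Quaternion.imK_coe, Quaternion.imK_smul, hk,
          smul_eq_mul, mul_div_cancel₀ _ hyne, zero_add]

/-- Liouville-type theorem for bounded Δ_*-harmonic slice functions. -/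
theorem stmt_12 (f : H4 → H4) (hslice : IsSliceOn Set.univ f) (hf2 : ContDiff ℝ 2 f)
    (hbd : ∃ C : ℝ, ∀ q : H4, ‖f q‖ ≤ C)
    (hharm : ∀ I ∈ Sph, ∀ x y : ℝ, lapSlice f I ((x : H4) + y • I) = 0) :
    ∀ p q : H4, f p = f q := by
  obtain ⟨C, hC⟩ := hbd
  have hfd : Differentiable ℝ f := hf2.differentiable two_ne_zero
  have hf' : ContDiff ℝ 1 (fderiv ℝ f) := hf2.fderiv_right (by norm_num)
  have hf'd : Differentiable ℝ (fderiv ℝ f) := hf'.differentiable one_ne_zero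
  have hco : ∀ r : ℝ, (r : H4) = r • (1 : H4) := by
    intro r
    ext <;> simp
  have key : ∀ I ∈ Sph, ∀ z : ℂ, f ((z.re : H4) + z.im • I) = f 0 := by
    intro I hI z
    set ι : ℂ →L[ℝ] H4 := Complex.reCLM.smulRight (1:H4) + Complex.imCLM.smulRight I with hιdef
    have hι : ∀ w : ℂ, ι w = (w.re : H4) + w.im • I := by
      intro w
      simp only [hιdef, ContinuousLinearMap.add_apply, ContinuousLinearMap.smulRight_apply,
        Complex.reCLM_apply, Complex.imCLM_apply]
      rw [hco w.re]
    have hι1 : ι 1 = 1 := by rw [hι]; simp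
    have hιI : ι Complex.I = I := by rw [hι]; simp
    have hι0 : ι 0 = 0 := map_zero ι
    set g : ℂ → H4 := f ∘ ι with hgdef
    have hg2 : ContDiff ℝ 2 g := hf2.comp ι.contDiff
    have hgd : Differentiable ℝ g := hg2.differentiable two_ne_zero
    have hg' : ContDiff ℝ 1 (fderiv ℝ g) := hg2.fderiv_right (by norm_num)
    have hg'd : Differentiable ℝ (fderiv ℝ g) := hg'.differentiable one_ne_zero
    have hgder : ∀ (w : ℂ) (v : ℂ), fderiv ℝ g w v = fderiv ℝ f (ι w) (ι v) := by
      intro w v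
      rw [hgdef, fderiv_comp w (hfd (ι w)) ι.differentiableAt, ContinuousLinearMap.fderiv]
      rfl
    have hg2der : ∀ (v : ℂ) (w : ℂ),
        fderiv ℝ (fun p => fderiv ℝ g p v) w v
          = fderiv ℝ (fun p => fderiv ℝ f p (ι v)) (ι w) (ι v) := by
      intro v w
      have h1 : (fun p => fderiv ℝ g p v) = (fun p => fderiv ℝ f p (ι v)) ∘ ι := by
        funext p; exact hgder p v
      have h2 : DifferentiableAt ℝ (fun p => fderiv ℝ f p (ι v)) (ι w) := by
        have : (fun p => fderiv ℝ f p (ι v))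
            = (ContinuousLinearMap.apply ℝ H4 (ι v)) ∘ (fderiv ℝ f) := rfl
        rw [this]
        exact ((ContinuousLinearMap.apply ℝ H4 (ι v)).differentiableAt).comp _ (hf'd (ι w))
      rw [h1, fderiv_comp w h2 ι.differentiableAt, ContinuousLinearMap.fderiv]
      rfl
    have hglap : ∀ w : ℂ,
        fderiv ℝ (fun p => fderiv ℝ g p 1) w 1
          + fderiv ℝ (fun p => fderiv ℝ g p Complex.I) w Complex.I = 0 := by
      intro w
      have h := hharm I hI w.re w.im
      rw [lapSlice] at h
      rw [hg2der 1 w, hg2der Complex.I w, hι1, hιI, hι w]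
      exact h
    have hval : g z = g 0 := by
      apply ext_inner_left ℝ
      intro v
      set L : H4 →L[ℝ] ℝ := innerSL ℝ v with hLdef
      set u : ℂ → ℝ := fun w => L (g w) with hudef
      have hu2 : ContDiff ℝ 2 u := L.contDiff.comp hg2
      have hub : ∀ w, |u w| ≤ ‖v‖ * C := by
        intro w
        have h1 : |u w| ≤ ‖v‖ * ‖g w‖ := by
          simpa [hudef, hLdef] using abs_real_inner_le_norm v (g w)
        exact h1.trans (mul_le_mul_of_nonneg_left (hC (ι w)) (norm_nonneg v))
      have huder : ∀ (w : ℂ) (v' : ℂ), fderiv ℝ u w v' = L (fderiv ℝ g w v') := by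
        intro w v'
        rw [hudef]
        have : (fun w => L (g w)) = ⇑L ∘ g := rfl
        rw [this, fderiv_comp w L.differentiableAt (hgd w), ContinuousLinearMap.fderiv]
        rfl
      have hu2der : ∀ (v' : ℂ) (w : ℂ),
          fderiv ℝ (fun p => fderiv ℝ u p v') w v'
            = L (fderiv ℝ (fun p => fderiv ℝ g p v') w v') := by
        intro v' w
        have h1 : (fun p => fderiv ℝ u p v') = ⇑L ∘ (fun p => fderiv ℝ g p v') := by
          funext p; exact huder p v'
        have h2 : DifferentiableAt ℝ (fun p => fderiv ℝ g p v') w := by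
          have : (fun p : ℂ => fderiv ℝ g p v')
              = (ContinuousLinearMap.apply ℝ H4 v') ∘ (fderiv ℝ g) := rfl
          rw [this]
          exact ((ContinuousLinearMap.apply ℝ H4 v').differentiableAt).comp _ (hg'd w)
        rw [h1, fderiv_comp w L.differentiableAt h2, ContinuousLinearMap.fderiv]
        rfl
      have huharm : ∀ w : ℂ, fderiv ℝ (fun p => fderiv ℝ u p 1) w 1
          + fderiv ℝ (fun p => fderiv ℝ u p Complex.I) w Complex.I = 0 := by
        intro w
        rw [hu2der 1 w, hu2der Complex.I w, ← map_add, hglap w, map_zero]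
      have := harmLiouville u hu2 (‖v‖ * C) hub huharm z
      simpa [hudef, hLdef] using this
    have hg0 : g 0 = f 0 := by rw [hgdef]; simp [Function.comp, hι0]
    calc f ((z.re : H4) + z.im • I) = g z := by rw [hgdef]; simp [Function.comp, hι z]
      _ = f 0 := by rw [hval, hg0]
  suffices hq : ∀ q, f q = f 0 by intro p q; rw [hq p, hq q]
  intro q
  obtain ⟨I, hI, z, hq⟩ := quat_decomp q
  rw [hq]
  exact key I hI z
end
end

section
/- Let u : ℍ → ℝ be a C² rotationally invariant function (u(w⁻¹ q w) = u(q) for all q ∈ ℍ, w ∈ 𝕊) such that for every I ∈ 𝕊 the function (x,y) ↦ u(x+yI) is harmonic on ℝ² (i.e. Δ′u = 0). Let f : ℍ → ℍ be a slice-preserving slice regular function. Then the composition u∘f satisfies Δ′(u∘f) = 0; equivalently, for every I ∈ 𝕊 the function (x,y) ↦ u(f(x+yI)) is harmonic on ℝ². -/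
open Quaternion MeasureTheory Metric Filter

noncomputable section

namespace Stmt15

lemma mem_sph_iff {I : H4} : I ∈ Sph ↔ I * I = -1 := by rw [Sph, Set.mem_setOf_eq, sq]
lemma sph_mul_self {I : H4} (hI : I ∈ Sph) : I * I = -1 := mem_sph_iff.mp hI

abbrev iH : H4 := ⟨0,1,0,0⟩
abbrev jH : H4 := ⟨0,0,1,0⟩

lemma sph_iH : iH ∈ Sph := by rw [mem_sph_iff]; ext <;> simp
lemma sph_jH : jH ∈ Sph := by rw [mem_sph_iff]; ext <;> simp

lemma mem_sph_of {I : H4} (h0 : I.re = 0) (h1 : normSq I = 1) : I ∈ Sph := by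
  rw [Quaternion.normSq_def'] at h1
  rw [mem_sph_iff]
  ext <;> simp [h0] <;> nlinarith [h1]

def iota (I : H4) (z : ℂ) : H4 := (z.re : H4) + z.im • I

lemma iota_coe (I : H4) (r : ℝ) : iota I (r : ℂ) = (r : H4) := by simp [iota]
lemma iota_one (I : H4) : iota I 1 = 1 := by
  have := iota_coe I 1; simpa using this
lemma iota_add (I : H4) (z w : ℂ) : iota I (z + w) = iota I z + iota I w := by
  ext <;> simp [iota] <;> ring
lemma iota_smul (I : H4) (r : ℝ) (z : ℂ) : iota I (r • z) = r • iota I z := by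
  ext <;> simp [iota, Complex.smul_re, Complex.smul_im] <;> ring
lemma iota_neg (I : H4) (z : ℂ) : iota I (-z) = - iota I z := by
  ext <;> simp [iota] <;> ring

lemma iota_mul {I : H4} (hII : I * I = -1) (z w : ℂ) :
    iota I (z * w) = iota I z * iota I w := by
  simp only [iota, Complex.mul_re, Complex.mul_im]
  rw [add_mul, mul_add, mul_add, smul_mul_assoc, smul_mul_assoc, mul_smul_comm, mul_smul_comm,
    smul_smul, hII]
  ext <;> simp <;> ring

lemma iota_pow {I : H4} (hII : I * I = -1) (z : ℂ) (n : ℕ) :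
    iota I (z ^ n) = (iota I z) ^ n := by
  induction n with
  | zero => simpa using iota_one I
  | succ n ih => rw [pow_succ, pow_succ, iota_mul hII, ih]

/-- `iota I` as a continuous `ℝ`-linear map. -/
def iotaL (I : H4) : ℂ →L[ℝ] H4 :=
  LinearMap.toContinuousLinearMap
    { toFun := iota I
      map_add' := iota_add I
      map_smul' := iota_smul I }

@[simp] lemma iotaL_apply (I : H4) (z : ℂ) : iotaL I z = iota I z := rfl

lemma iota_mk (I : H4) (x y : ℝ) : iota I ((x:ℂ) + (y:ℂ) * Complex.I) = (x : H4) + y • I := by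
  simp [iota]

lemma div_two_eq_smul (q : H4) : q / 2 = (2⁻¹ : ℝ) • q := by
  rw [div_eq_mul_inv]
  have h2 : ((2:ℝ):H4) = 2 := by norm_cast
  have : ((2:H4))⁻¹ = (((2⁻¹:ℝ)) : H4) := by rw [← h2, ← Quaternion.coe_inv]
  rw [this, Quaternion.mul_coe_eq_smul]

/-- projection of ℍ onto ℂ (re, imI) -/
def piC : H4 →L[ℝ] ℂ :=
  LinearMap.toContinuousLinearMap
    { toFun := fun q => ⟨q.re, q.imI⟩
      map_add' := by intro a b; simp [Complex.ext_iff]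
      map_smul' := by intro r a; simp [Complex.ext_iff] }

@[simp] lemma piC_re (q : H4) : (piC q).re = q.re := rfl
@[simp] lemma piC_im (q : H4) : (piC q).im = q.imI := rfl

def reCLM : H4 →L[ℝ] ℝ :=
  LinearMap.toContinuousLinearMap
    { toFun := QuaternionAlgebra.re
      map_add' := by intro a b; simp
      map_smul' := by intro r a; simp }

def imCLM : H4 →L[ℝ] H4 :=
  LinearMap.toContinuousLinearMap
    { toFun := Quaternion.im
      map_add' := by intro a b; simp
      map_smul' := by intro r a; simp }

def coeCLM : ℝ →L[ℝ] H4 :=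
  LinearMap.toContinuousLinearMap
    { toFun := fun r => (r : H4)
      map_add' := by intro a b; push_cast; ring
      map_smul' := by intro r a; simp [Quaternion.smul_coe] }

@[simp] lemma reCLM_apply (q : H4) : reCLM q = q.re := rfl
@[simp] lemma imCLM_apply (q : H4) : imCLM q = q.im := rfl
@[simp] lemma coeCLM_apply (r : ℝ) : coeCLM r = (r : H4) := rfl

-- decomposition of a quaternion as a point on some slice
lemma exists_iota_rep (q : H4) : ∃ J ∈ Sph, ∃ z : ℂ, q = iota J z ∧ ‖z‖ = ‖q‖ := by
  have hnormsq : ∀ p : H4, ‖p‖ = Real.sqrt (normSq p) := by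
    intro p
    rw [Quaternion.normSq_eq_norm_mul_self, Real.sqrt_mul_self (norm_nonneg p)]
  by_cases him : q.im = 0
  · refine ⟨iH, sph_iH, (q.re : ℂ), ?_, ?_⟩
    · have h1 : q.imI = 0 := by
        have := congrArg QuaternionAlgebra.imI him; simpa using this
      have h2 : q.imJ = 0 := by
        have := congrArg QuaternionAlgebra.imJ him; simpa using this
      have h3 : q.imK = 0 := by
        have := congrArg QuaternionAlgebra.imK him; simpa using this
      ext <;> simp [iota, h1, h2, h3]
    · rw [show ((q.re:ℂ)) = ((q.re:ℝ):ℂ) from rfl, Complex.norm_real, Real.norm_eq_abs]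
      have : q = ((q.re : ℝ) : H4) := by
        conv_lhs => rw [← Quaternion.re_add_im q]
        rw [him, add_zero]
      rw [show ‖q‖ = ‖((q.re:ℝ):H4)‖ from by rw [← this], Quaternion.norm_coe]
      rfl
  · set J : H4 := ‖q.im‖⁻¹ • q.im with hJ
    have hnim : ‖q.im‖ ≠ 0 := by simpa using him
    have hJsph : J ∈ Sph := by
      apply mem_sph_of
      · simp [hJ]
      · rw [Quaternion.normSq_eq_norm_mul_self]
        rw [norm_smul]
        simp [norm_inv, inv_mul_cancel₀ hnim]
    refine ⟨J, hJsph, (q.re : ℂ) + (‖q.im‖ : ℂ) * Complex.I, ?_, ?_⟩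
    · have : iota J ((q.re : ℂ) + (‖q.im‖:ℂ) * Complex.I) = (q.re : H4) + ‖q.im‖ • J := by
        simp [iota]
      rw [this, hJ, smul_smul, mul_inv_cancel₀ hnim, one_smul, Quaternion.re_add_im]
    · have habs : (‖(q.re : ℂ) + (‖q.im‖:ℂ)*Complex.I‖)^2 = q.re^2 + ‖q.im‖^2 := by
        rw [Complex.sq_norm, Complex.normSq_add_mul_I]
      have h1 : normSq q = q.re^2 + normSq q.im := by
        rw [Quaternion.normSq_def', Quaternion.normSq_def']
        simp
        ring
      have h2 := Quaternion.normSq_eq_norm_mul_self q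
      have h3 := Quaternion.normSq_eq_norm_mul_self q.im
      nlinarith [norm_nonneg ((q.re : ℂ) + (‖q.im‖:ℂ)*Complex.I), norm_nonneg q, habs, h1, h2, h3]

section main

variable {f : H4 → H4}

/-- the complex function on the i-slice -/
def Fc (f : H4 → H4) (z : ℂ) : ℂ :=
  ((f (iota iH z)).re : ℂ) + (f (iota iH z)).imI * Complex.I

@[simp] lemma Fc_re (z : ℂ) : (Fc f z).re = (f (iota iH z)).re := by simp [Fc]
@[simp] lemma Fc_im (z : ℂ) : (Fc f z).im = (f (iota iH z)).imI := by simp [Fc]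

lemma Fc_eq_piC (f : H4 → H4) : Fc f = fun z => piC (f (iota iH z)) := by
  funext z; rw [Complex.ext_iff]; constructor <;> simp [Fc]

variable (hs : IsSliceOn Set.univ f)
  (hfp : ∀ I ∈ Sph, ∀ x y : ℝ, ∃ a b : ℝ, f ((x : H4) + y • I) = (a : H4) + b • I)

include hfp in
lemma f_iota_iH (z : ℂ) : f (iota iH z) = iota iH (Fc f z) := by
  obtain ⟨a, b, hab⟩ := hfp iH sph_iH z.re z.im
  have h : f (iota iH z) = (a:H4) + b • iH := hab
  ext
  · simp [iota]
  · simp [iota]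
  · simp [iota, hab]
  · simp [iota, hab]

include hs hfp in
lemma fc_conj (z : ℂ) : Fc f ((starRingEnd ℂ) z) = (starRingEnd ℂ) (Fc f z) := by
  set x := z.re; set y := z.im
  have hz : (x:ℂ) + y * Complex.I = z := Complex.re_add_im z
  have hrep := hs x y iH sph_iH jH sph_jH (Set.mem_univ _)
  obtain ⟨c, d, hcd⟩ := hfp jH sph_jH x y
  have h1 : f ((x:H4) + y • iH) = iota iH (Fc f z) := by
    have := f_iota_iH (f := f) hfp z
    rwa [show iota iH z = (x:H4) + y • iH from by rw [← hz, iota_mk]] at this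
  have h2 : f ((x:H4) - y • iH) = iota iH (Fc f ((starRingEnd ℂ) z)) := by
    have := f_iota_iH (f := f) hfp ((starRingEnd ℂ) z)
    rw [show iota iH ((starRingEnd ℂ) z) = (x:H4) - y • iH from by
      simp [iota, sub_eq_add_neg]; rfl] at this
    exact this
  rw [hcd, h1, h2, div_two_eq_smul, div_two_eq_smul, smul_mul_assoc, smul_mul_assoc] at hrep
  have hI := congrArg QuaternionAlgebra.imI hrep
  have hK := congrArg QuaternionAlgebra.imK hrep
  simp [iota] at hI hK
  have e1 : iota iH z = (z.re:H4) + z.im • iH := rfl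
  have e2 : iota iH ((starRingEnd ℂ) z) = (z.re:H4) + -(z.im • iH) := by
    simp [iota]
  rw [Complex.ext_iff]
  simp only [Fc_re, Fc_im, Complex.conj_re, Complex.conj_im, e1, e2]
  constructor <;> linarith

include hs hfp in
lemma master {J : H4} (hJ : J ∈ Sph) (x y : ℝ) :
    f ((x:H4) + y • J) = iota J (Fc f ((x:ℂ) + (y:ℂ) * Complex.I)) := by
  have hrep := hs x y iH sph_iH J hJ (Set.mem_univ _)
  set z : ℂ := (x:ℂ) + (y:ℂ)*Complex.I with hzdef
  have hzre : z.re = x := by simp [hzdef]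
  have hzim : z.im = y := by simp [hzdef]
  have h1 : f ((x:H4) + y • iH) = iota iH (Fc f z) := by
    have h := f_iota_iH (f := f) hfp z
    rwa [show iota iH z = (x:H4) + y • iH from by simp [iota, hzre, hzim]] at h
  have h2 : f ((x:H4) - y • iH) = iota iH ((starRingEnd ℂ) (Fc f z)) := by
    have h := f_iota_iH (f := f) hfp ((starRingEnd ℂ) z)
    rw [show iota iH ((starRingEnd ℂ) z) = (x:H4) - y • iH from by
      simp [iota, hzre, hzim, sub_eq_add_neg], fc_conj hs hfp] at h
    exact h
  rw [h1, h2, div_two_eq_smul, div_two_eq_smul, smul_mul_assoc, smul_mul_assoc] at hrep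
  rw [hrep]
  ext <;> simp [iota] <;> ring

include hs hfp in
lemma master_iota {J : H4} (hJ : J ∈ Sph) (z : ℂ) :
    f (iota J z) = iota J (Fc f z) := by
  have h := master hs hfp hJ z.re z.im
  rwa [show ((z.re:ℂ) + (z.im:ℂ) * Complex.I) = z from Complex.re_add_im z,
    show ((z.re:H4) + z.im • J) = iota J z from rfl] at h

variable (hd : Differentiable ℝ f)
  (hCR : ∀ (x y : ℝ), fderiv ℝ f ((x : H4) + y • iH) 1
      + iH * fderiv ℝ f ((x : H4) + y • iH) iH = 0)

include hd hCR in
lemma fc_differentiable : Differentiable ℂ (Fc f) := by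
  intro z
  set q : H4 := iota iH z with hq
  have hq' : q = (z.re : H4) + z.im • iH := rfl
  set A := fderiv ℝ f q with hA
  have hcr : A 1 + iH * A iH = 0 := by rw [hA, hq']; exact hCR z.re z.im
  have hii : iH * iH = -1 := by ext <;> simp
  have hAi : A iH = iH * A 1 := by
    have h1 : A 1 = -(iH * A iH) := by linear_combination (norm := module) hcr
    rw [h1, mul_neg, ← mul_assoc, hii]
    simp
  have hB : HasFDerivAt (Fc f) ((piC.comp ((fderiv ℝ f q).comp (iotaL iH))) : ℂ →L[ℝ] ℂ) z := by
    rw [Fc_eq_piC]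
    have hin : HasFDerivAt (fun z' : ℂ => f (iota iH z')) ((fderiv ℝ f q).comp (iotaL iH)) z :=
      HasFDerivAt.comp z (hd q).hasFDerivAt (iotaL iH).hasFDerivAt
    exact HasFDerivAt.comp z piC.hasFDerivAt hin
  set B := (piC.comp ((fderiv ℝ f q).comp (iotaL iH))) with hBdef
  set c : ℂ := B 1 with hc
  have hBi : B Complex.I = Complex.I * B 1 := by
    have h1 : iota iH (1:ℂ) = 1 := by ext <;> simp [iota]
    have h2 : iota iH Complex.I = iH := by ext <;> simp [iota]
    simp only [hBdef, ContinuousLinearMap.comp_apply, iotaL_apply, h1, h2, ← hA]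
    rw [hAi]
    rw [Complex.ext_iff]
    constructor <;> simp
  have hBL : (((c • ContinuousLinearMap.id ℂ ℂ) : ℂ →L[ℂ] ℂ).restrictScalars ℝ) = B := by
    apply ContinuousLinearMap.ext
    intro w
    have hw : w = w.re • (1:ℂ) + w.im • Complex.I := by
      simp [Complex.real_smul, Complex.re_add_im]
    have hrs : (ContinuousLinearMap.restrictScalars ℝ (c • ContinuousLinearMap.id ℂ ℂ)) w = c * w := rfl
    rw [hrs]
    conv_rhs => rw [hw]
    rw [map_add, B.map_smul, B.map_smul, hBi]
    rw [hc]
    simp [Complex.ext_iff]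
    constructor <;> ring
  exact (hasFDerivAt_of_restrictScalars (𝕜 := ℝ) (f' := (c • ContinuousLinearMap.id ℂ ℂ)) hB hBL).differentiableAt

include hs hfp hd hCR in
lemma f_contDiffAt_coe {n : WithTop ℕ∞} (x₀ : ℝ) : ContDiffAt ℝ n f ((x₀ : H4)) := by
  have hFc : Differentiable ℂ (Fc f) := fc_differentiable hd hCR
  have hconj : ∀ z, Fc f ((starRingEnd ℂ) z) = (starRingEnd ℂ) (Fc f z) := fc_conj hs hfp
  obtain ⟨p, hpa⟩ := hFc.analyticAt (x₀ : ℂ)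
  obtain ⟨r, hpr⟩ := hpa
  set c : ℕ → ℂ := fun m => p.coeff m with hcdef
  have hcoeffnorm : ∀ m, ‖c m‖ ≤ ‖p m‖ := by
    intro m
    have h1 : c m = p m (fun _ => 1) := rfl
    rw [h1]
    have := (p m).le_opNorm (fun _ => 1)
    simpa using this
  -- realness of the coefficients
  have hreal : ∀ m, (c m).im = 0 := by
    set q2 : FormalMultilinearSeries ℂ ℂ ℂ :=
      FormalMultilinearSeries.ofScalars ℂ (fun m => (starRingEnd ℂ) (c m)) with hq2
    have hq2norm : ∀ m, ‖q2 m‖ ≤ ‖p m‖ := by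
      intro m
      rw [hq2, FormalMultilinearSeries.ofScalars_norm]
      rw [RCLike.norm_conj]
      exact hcoeffnorm m
    have hq2ball : HasFPowerSeriesOnBall (Fc f) q2 (x₀ : ℂ) r := by
      refine ⟨?_, hpr.r_pos, ?_⟩
      · refine le_trans hpr.r_le (ENNReal.le_of_forall_nnreal_lt fun r' hr' => ?_)
        apply FormalMultilinearSeries.le_radius_of_summable_norm
        refine Summable.of_nonneg_of_le (fun m => by positivity) (fun m => ?_)
          (p.summable_norm_mul_pow hr')
        exact mul_le_mul_of_nonneg_right (hq2norm m) (by positivity)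
      · intro w hw
        have hwc : (starRingEnd ℂ) w ∈ Metric.eball (0:ℂ) r := by
          rw [mem_emetric_ball_zero_iff] at hw ⊢
          simpa using hw
        have h0 := hpr.hasSum hwc
        have h1 := h0.star
        have hterm : ∀ m, star (p m fun _ => (starRingEnd ℂ) w) = q2 m (fun _ => w) := by
          intro m
          rw [FormalMultilinearSeries.apply_eq_pow_smul_coeff, hq2,
            FormalMultilinearSeries.ofScalars_apply_eq]
          rw [smul_eq_mul, smul_eq_mul]
          rw [show (star (((starRingEnd ℂ) w) ^ m * p.coeff m) : ℂ)
            = (starRingEnd ℂ) (((starRingEnd ℂ) w) ^ m * p.coeff m) from rfl]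
          rw [map_mul, map_pow]
          simp [mul_comm, hcdef]
        have hval : (star (Fc f ((x₀:ℂ) + (starRingEnd ℂ) w)) : ℂ) = Fc f ((x₀:ℂ) + w) := by
          have := hconj ((x₀:ℂ) + (starRingEnd ℂ) w)
          rw [map_add] at this
          simp only [Complex.conj_conj] at this
          rw [show (starRingEnd ℂ) ((x₀:ℂ)) = (x₀:ℂ) from Complex.conj_ofReal x₀] at this
          exact this.symm
        rw [show (fun m => q2 m fun _ => w) = (fun m => star (p m fun _ => (starRingEnd ℂ) w))
          from funext fun m => (hterm m).symm, ← hval]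
        exact h1
    have hpq : p = q2 := hpr.hasFPowerSeriesAt.eq_formalMultilinearSeries ⟨r, hq2ball⟩
    intro m
    have h1 : c m = q2.coeff m := by rw [hcdef]; simp only [← hpq]
    have h2 : q2.coeff m = (starRingEnd ℂ) (c m) := by
      have : q2.coeff m = q2 m (fun _ => 1) := rfl
      rw [this, hq2, FormalMultilinearSeries.ofScalars_apply_eq]
      simp
    have h3 : (starRingEnd ℂ) (c m) = c m := by rw [← h2, ← h1]
    exact (Complex.conj_eq_iff_im.mp h3)
  -- the quaternionic power series
  set P : FormalMultilinearSeries ℝ H4 H4 :=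
    FormalMultilinearSeries.ofScalars H4 (fun m => (c m).re) with hP
  have hPnorm : ∀ m, ‖P m‖ ≤ ‖p m‖ := by
    intro m
    rw [hP, FormalMultilinearSeries.ofScalars_norm]
    refine le_trans ?_ (hcoeffnorm m)
    exact (Complex.abs_re_le_norm (c m)).trans_eq' (by simp)
  have hball : HasFPowerSeriesOnBall f P ((x₀:ℝ) : H4) r := by
    refine ⟨?_, hpr.r_pos, ?_⟩
    · refine le_trans hpr.r_le (ENNReal.le_of_forall_nnreal_lt fun r' hr' => ?_)
      apply FormalMultilinearSeries.le_radius_of_summable_norm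
      refine Summable.of_nonneg_of_le (fun m => by positivity) (fun m => ?_)
        (p.summable_norm_mul_pow hr')
      exact mul_le_mul_of_nonneg_right (hPnorm m) (by positivity)
    · intro w hw
      obtain ⟨J, hJ, zw, hwz, habs⟩ := exists_iota_rep w
      have hzw : zw ∈ Metric.eball (0:ℂ) r := by
        rw [mem_emetric_ball_zero_iff] at hw ⊢
        have : ‖zw‖ₑ = ‖w‖ₑ := by
          rw [← ofReal_norm, ← ofReal_norm, habs]
        rwa [this]
      have h0 := hpr.hasSum hzw
      have h1 := h0.mapL (iotaL J)
      have hterm : ∀ m, iotaL J (p m fun _ => zw) = P m (fun _ => w) := by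
        intro m
        rw [FormalMultilinearSeries.apply_eq_pow_smul_coeff, hP,
          FormalMultilinearSeries.ofScalars_apply_eq, iotaL_apply, smul_eq_mul,
          iota_mul (sph_mul_self hJ), iota_pow (sph_mul_self hJ)]
        have hcm : iota J (p.coeff m) = (((c m).re : ℝ) : H4) := by
          rw [iota]
          rw [show (p.coeff m).im = 0 from hreal m]
          simp [hcdef]
        rw [hcm, ← hwz, Quaternion.mul_coe_eq_smul]
      have hval : iota J (Fc f ((x₀:ℂ) + zw)) = f ((x₀:H4) + w) := by
        have := master_iota hs hfp hJ ((x₀:ℂ) + zw)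
        rw [iota_add, iota_coe, ← hwz] at this
        exact this.symm
      rw [show (fun m => P m fun _ => w) = (fun m => iotaL J (p m fun _ => zw))
        from funext fun m => (hterm m).symm, ← hval]
      exact h1
  exact hball.analyticAt.contDiffAt

include hs hfp hd hCR in
lemma f_contDiffAt_nonreal {n : WithTop ℕ∞} (q : H4) (hqim : q.im ≠ 0) :
    ContDiffAt ℝ n f q := by
  have hFc : Differentiable ℂ (Fc f) := fc_differentiable hd hCR
  have hFcs : ContDiff ℝ n (Fc f) := (hFc.contDiff (n := n)).restrict_scalars ℝ
  set G : H4 → H4 := fun p =>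
    (((Fc f ((p.re : ℂ) + (‖p.im‖ : ℂ) * Complex.I)).re : ℝ) : H4)
      + ((Fc f ((p.re : ℂ) + (‖p.im‖ : ℂ) * Complex.I)).im * ‖p.im‖⁻¹) • p.im with hG
  have hfeq : ∀ p : H4, p.im ≠ 0 → f p = G p := by
    intro p hp
    have hnim : ‖p.im‖ ≠ 0 := by simpa using hp
    set J : H4 := ‖p.im‖⁻¹ • p.im with hJdef
    have hJsph : J ∈ Sph := by
      apply mem_sph_of
      · simp [hJdef]
      · rw [Quaternion.normSq_eq_norm_mul_self, norm_smul]
        simp [norm_inv, inv_mul_cancel₀ hnim]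
    have hpdec : p = (p.re : H4) + ‖p.im‖ • J := by
      rw [hJdef, smul_smul, mul_inv_cancel₀ hnim, one_smul, Quaternion.re_add_im]
    have hm := master hs hfp hJsph p.re ‖p.im‖
    rw [← hpdec] at hm
    rw [hm, hG]
    have : iota J ((Fc f ((p.re:ℂ) + (‖p.im‖:ℂ) * Complex.I)))
        = ((Fc f ((p.re:ℂ) + (‖p.im‖:ℂ) * Complex.I)).re : H4)
          + (Fc f ((p.re:ℂ) + (‖p.im‖:ℂ) * Complex.I)).im • J := by
      simp [iota]
    rw [this, hJdef, smul_smul]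
  have hmem : {p : H4 | p.im ≠ 0} ∈ nhds q := by
    have : IsOpen {p : H4 | p.im ≠ 0} :=
      isOpen_compl_iff.mpr (isClosed_singleton.preimage Quaternion.continuous_im)
    exact this.mem_nhds hqim
  have hGsm : ContDiffAt ℝ n G q := by
    have hre : ContDiffAt ℝ n (fun p : H4 => p.re) q := reCLM.contDiff.contDiffAt
    have him : ContDiffAt ℝ n (fun p : H4 => p.im) q := imCLM.contDiff.contDiffAt
    have hnorm : ContDiffAt ℝ n (fun p : H4 => ‖p.im‖) q :=
      (contDiffAt_norm ℝ hqim).comp q him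
    have hz : ContDiffAt ℝ n (fun p : H4 => (p.re : ℂ) + (‖p.im‖ : ℂ) * Complex.I) q := by
      apply ContDiffAt.add
      · exact Complex.ofRealCLM.contDiff.contDiffAt.comp q hre
      · exact (Complex.ofRealCLM.contDiff.contDiffAt.comp q hnorm).mul contDiffAt_const
    have hFcz : ContDiffAt ℝ n (fun p : H4 => Fc f ((p.re : ℂ) + (‖p.im‖ : ℂ) * Complex.I)) q :=
      hFcs.contDiffAt.comp q hz
    apply ContDiffAt.add
    · exact coeCLM.contDiff.contDiffAt.comp q (Complex.reCLM.contDiff.contDiffAt.comp q hFcz)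
    · apply ContDiffAt.smul (f := fun p : H4 => (Fc f ((p.re : ℂ) + (‖p.im‖ : ℂ) * Complex.I)).im * ‖p.im‖⁻¹) (g := fun p : H4 => p.im)
      · exact (Complex.imCLM.contDiff.contDiffAt.comp q hFcz).mul (hnorm.inv (by simpa using hqim))
      · exact him
  apply hGsm.congr_of_eventuallyEq
  filter_upwards [hmem] with p hp
  exact hfeq p hp

include hs hfp hd hCR in
lemma f_contDiffAt {n : WithTop ℕ∞} (q : H4) : ContDiffAt ℝ n f q := by
  by_cases him : q.im = 0
  · have : q = ((q.re : ℝ) : H4) := by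
      conv_lhs => rw [← Quaternion.re_add_im q]
      rw [him, add_zero]
    rw [this]
    exact f_contDiffAt_coe hs hfp hd hCR q.re
  · exact f_contDiffAt_nonreal hs hfp hd hCR q him

end main

lemma hasDerivAt_iota_comp (I : H4) {g : ℂ → ℂ} {g' : ℂ} {z : ℂ}
    (hg : HasDerivAt g g' z) (w : ℂ) :
    HasDerivAt (fun t : ℝ => iota I (g (z + (t : ℝ) • w))) (iota I (w * g')) 0 := by
  have hline : HasDerivAt (fun t : ℝ => z + (t:ℝ) • w) w 0 := by
    simpa using ((hasDerivAt_id (0:ℝ)).smul_const w).const_add z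
  have hg0 : HasDerivAt g g' (z + (0:ℝ) • w) := by simpa using hg
  have hcomp := HasDerivAt.scomp (0:ℝ) hg0 hline
  have hfin := (iotaL I).hasFDerivAt.comp_hasDerivAt 0 hcomp
  have : (iotaL I) (w • g') = iota I (w * g') := by
    rw [iotaL_apply, smul_eq_mul]
  rw [this] at hfin
  exact hfin

end Stmt15

set_option maxHeartbeats 1000000 in
open Stmt15 in
/-- Δ′(u ∘ f) = 0 for u rotationally invariant with Δ′u = 0 and
f slice-preserving slice regular. -/
theorem stmt_15 (u : H4 → ℝ) (hu : ContDiff ℝ 2 u)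
    (huinv : ∀ q : H4, ∀ w ∈ Sph, u (w⁻¹ * q * w) = u q)
    (hharm : ∀ I ∈ Sph, ∀ x y : ℝ, lapSliceR u I ((x : H4) + y • I) = 0)
    (f : H4 → H4) (hf : IsSliceRegularOn Set.univ f)
    (hfp : ∀ I ∈ Sph, ∀ x y : ℝ, ∃ a b : ℝ, f ((x : H4) + y • I) = (a : H4) + b • I) :
    ∀ I ∈ Sph, ∀ x y : ℝ, lapSliceR (u ∘ f) I ((x : H4) + y • I) = 0 := by
  intro I hI x y
  have hs : IsSliceOn Set.univ f := hf.1
  have hd : Differentiable ℝ f := differentiableOn_univ.mp hf.2.1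
  have hCR : ∀ x' y' : ℝ, fderiv ℝ f ((x':H4) + y' • iH) 1
      + iH * fderiv ℝ f ((x':H4) + y' • iH) iH = 0 :=
    fun x' y' => hf.2.2 x' y' iH sph_iH (Set.mem_univ _)
  have hFc : Differentiable ℂ (Fc f) := fc_differentiable hd hCR
  set F1 : ℂ → ℂ := deriv (Fc f) with hF1def
  have hF1d : Differentiable ℂ F1 := by
    have h2 : ContDiff ℂ (1 + 1) (Fc f) := hFc.contDiff
    rw [contDiff_succ_iff_deriv] at h2
    exact h2.2.2.differentiable one_ne_zero
  set F2 : ℂ → ℂ := deriv F1 with hF2def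
  set z : ℂ := (x:ℂ) + (y:ℂ) * Complex.I with hzdef
  have hq : (x:H4) + y • I = iota I z := (iota_mk I x y).symm
  have hmi : ∀ ζ, f (iota I ζ) = iota I (Fc f ζ) := master_iota hs hfp hI
  have hiota1 : ∀ (ζ : ℂ) (t : ℝ), iota I (ζ + (t:ℝ) • (1:ℂ)) = iota I ζ + t • (1:H4) := by
    intro ζ t
    rw [iota_add, iota_smul, iota_one]
  have hiotaI : ∀ (ζ : ℂ) (t : ℝ), iota I (ζ + (t:ℝ) • Complex.I) = iota I ζ + t • I := by
    intro ζ t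
    rw [iota_add, iota_smul]
    congr 2
    ext <;> simp [iota]
  -- first-order derivatives of f along the slice
  have key1 : ∀ ζ : ℂ, fderiv ℝ f (iota I ζ) 1 = iota I (F1 ζ) := by
    intro ζ
    have hc1 : HasDerivAt (fun t : ℝ => f (iota I (ζ + (t:ℝ) • (1:ℂ)))) (iota I ((1:ℂ) * F1 ζ)) 0 := by
      rw [show (fun t : ℝ => f (iota I (ζ + (t:ℝ) • (1:ℂ))))
        = fun t : ℝ => iota I (Fc f (ζ + (t:ℝ) • (1:ℂ))) from funext fun t => hmi _]
      exact hasDerivAt_iota_comp I (hFc ζ).hasDerivAt 1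
    have hline : HasDerivAt (fun t : ℝ => iota I ζ + t • (1:H4)) (1:H4) 0 := by
      simpa using ((hasDerivAt_id (0:ℝ)).smul_const (1:H4)).const_add (iota I ζ)
    have hpt : iota I ζ + (0:ℝ) • (1:H4) = iota I ζ := by simp
    have hc2 : HasDerivAt (fun t : ℝ => f (iota I (ζ + (t:ℝ) • (1:ℂ)))) (fderiv ℝ f (iota I ζ) 1) 0 := by
      rw [show (fun t : ℝ => f (iota I (ζ + (t:ℝ) • (1:ℂ))))
        = fun t : ℝ => f (iota I ζ + t • (1:H4)) from funext fun t => by rw [hiota1]]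
      have hc2' := HasFDerivAt.comp_hasDerivAt 0 (hpt.symm ▸ (hd (iota I ζ)).hasFDerivAt) hline
      simpa [Function.comp_def] using hc2'
    have := hc2.unique hc1
    rwa [one_mul] at this
  have keyI : ∀ ζ : ℂ, fderiv ℝ f (iota I ζ) I = iota I (Complex.I * F1 ζ) := by
    intro ζ
    have hc1 : HasDerivAt (fun t : ℝ => f (iota I (ζ + (t:ℝ) • Complex.I))) (iota I (Complex.I * F1 ζ)) 0 := by
      rw [show (fun t : ℝ => f (iota I (ζ + (t:ℝ) • Complex.I)))
        = fun t : ℝ => iota I (Fc f (ζ + (t:ℝ) • Complex.I)) from funext fun t => hmi _]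
      exact hasDerivAt_iota_comp I (hFc ζ).hasDerivAt Complex.I
    have hline : HasDerivAt (fun t : ℝ => iota I ζ + t • I) I 0 := by
      simpa using ((hasDerivAt_id (0:ℝ)).smul_const I).const_add (iota I ζ)
    have hpt : iota I ζ + (0:ℝ) • I = iota I ζ := by simp
    have hc2 : HasDerivAt (fun t : ℝ => f (iota I (ζ + (t:ℝ) • Complex.I))) (fderiv ℝ f (iota I ζ) I) 0 := by
      rw [show (fun t : ℝ => f (iota I (ζ + (t:ℝ) • Complex.I)))
        = fun t : ℝ => f (iota I ζ + t • I) from funext fun t => by rw [hiotaI]]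
      have hc2' := HasFDerivAt.comp_hasDerivAt 0 (hpt.symm ▸ (hd (iota I ζ)).hasFDerivAt) hline
      simpa [Function.comp_def] using hc2'
    exact hc2.unique hc1
  -- setup for second order computation
  have hudiff : Differentiable ℝ u := hu.differentiable two_ne_zero
  have hu1 : ContDiff ℝ 1 (fderiv ℝ u) := hu.fderiv_right (by norm_num)
  set p' : H4 := iota I (Fc f z) with hp'def
  set U2 : H4 →L[ℝ] H4 →L[ℝ] ℝ := fderiv ℝ (fderiv ℝ u) p' with hU2def
  set A : H4 := iota I (F1 z) with hAdef
  set B : H4 := iota I (Complex.I * F1 z) with hBdef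
  have hcomp : ∀ pt : H4, fderiv ℝ (u ∘ f) pt = (fderiv ℝ u (f pt)).comp (fderiv ℝ f pt) :=
    fun pt => fderiv_comp pt (hudiff (f pt)) (hd pt)
  have huf2 : ContDiffAt ℝ 2 (u ∘ f) (iota I z) :=
    (hu.contDiffAt).comp (iota I z) (f_contDiffAt hs hfp hd hCR (iota I z))
  have huf1 : ContDiffAt ℝ 1 (fderiv ℝ (u ∘ f)) (iota I z) := huf2.fderiv_right (by norm_num)
  -- the two second-order terms
  have hsnd : ∀ w : ℂ, ∀ dir : H4,
      (∀ (ζ : ℂ) (t : ℝ), iota I (ζ + (t:ℝ) • w) = iota I ζ + t • dir) →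
      (∀ ζ : ℂ, fderiv ℝ f (iota I ζ) dir = iota I (w * F1 ζ)) →
      fderiv ℝ (fun pt => fderiv ℝ (u ∘ f) pt dir) (iota I z) dir
        = (U2 (iota I (w * F1 z))) (iota I (w * F1 z))
          + (fderiv ℝ u p') (iota I (w * (w * F2 z))) := by
    intro w dir hlineq hkey
    have hline : HasDerivAt (fun t : ℝ => iota I z + t • dir) dir 0 := by
      simpa using ((hasDerivAt_id (0:ℝ)).smul_const dir).const_add (iota I z)
    have hpt : iota I z + (0:ℝ) • dir = iota I z := by simp
    have hRdiff : DifferentiableAt ℝ (fun pt => fderiv ℝ (u ∘ f) pt dir) (iota I z) :=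
      (huf1.differentiableAt one_ne_zero).clm_apply (differentiableAt_const _)
    have hc2 : HasDerivAt (fun t : ℝ => fderiv ℝ (u ∘ f) (iota I z + t • dir) dir)
        (fderiv ℝ (fun pt => fderiv ℝ (u ∘ f) pt dir) (iota I z) dir) 0 := by
      have hc2' := HasFDerivAt.comp_hasDerivAt 0 (hpt.symm ▸ hRdiff.hasFDerivAt) hline
      simpa [Function.comp_def] using hc2'
    -- rewrite the curve
    have hfun : (fun t : ℝ => fderiv ℝ (u ∘ f) (iota I z + t • dir) dir)
        = fun t : ℝ => (fderiv ℝ u (iota I (Fc f (z + (t:ℝ) • w)))) (iota I (w * F1 (z + (t:ℝ) • w))) := by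
      funext t
      rw [← hlineq, hcomp]
      rw [ContinuousLinearMap.comp_apply, hkey, hmi]
    -- derivative of the nice form
    have hg : HasDerivAt (fun t : ℝ => iota I (Fc f (z + (t:ℝ) • w))) (iota I (w * F1 z)) 0 :=
      hasDerivAt_iota_comp I (hFc z).hasDerivAt w
    have hp0 : iota I (Fc f (z + (0:ℝ) • w)) = p' := by simp [hp'def]
    have hGc : HasDerivAt (fun t : ℝ => fderiv ℝ u (iota I (Fc f (z + (t:ℝ) • w))))
        (U2 (iota I (w * F1 z))) 0 := by
      have hGc' := HasFDerivAt.comp_hasDerivAt 0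
        (hp0.symm ▸ ((hu1.differentiable one_ne_zero p').hasFDerivAt)) hg
      simpa [Function.comp_def, hU2def] using hGc'
    have hHc : HasDerivAt (fun t : ℝ => iota I (w * F1 (z + (t:ℝ) • w)))
        (iota I (w * (w * F2 z))) 0 := by
      have hmulF : HasDerivAt (fun ζ : ℂ => w * F1 ζ) (w * F2 z) z :=
        ((hF1d z).hasDerivAt).const_mul w
      exact hasDerivAt_iota_comp I hmulF w
    have hc1 := hGc.clm_apply hHc
    rw [hfun] at hc2
    have := hc2.unique hc1
    rw [this]
    simp [hp0, hp'def]
  have hT1 := hsnd 1 (1:H4) hiota1 (by simpa [one_mul] using key1)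
  have hTI := hsnd Complex.I I hiotaI keyI
  -- assemble
  rw [lapSliceR, hq, hT1, hTI]
  have hii : Complex.I * (Complex.I * F2 z) = -F2 z := by
    rw [← mul_assoc, Complex.I_mul_I, neg_one_mul]
  rw [hii, iota_neg, map_neg]
  rw [show (1:ℂ) * (1 * F2 z) = F2 z by ring, show (1:ℂ) * F1 z = F1 z by ring]
  -- Hessian expansion
  have hcoe : ∀ r : ℝ, (r : H4) = r • (1:H4) := by
    intro r
    rw [show (1:H4) = ((1:ℝ):H4) from rfl, Quaternion.smul_coe, mul_one]
  have hA : A = (F1 z).re • (1:H4) + (F1 z).im • I := by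
    rw [hAdef, iota, hcoe]
  have hB : B = (-(F1 z).im) • (1:H4) + (F1 z).re • I := by
    rw [hBdef, iota, hcoe]
    simp [Complex.mul_re, Complex.mul_im]
  have hexpand : (U2 A) A + (U2 B) B
      = ((F1 z).re^2 + (F1 z).im^2) * ((U2 1) 1 + (U2 I) I) := by
    rw [hA, hB]
    simp only [map_add, _root_.map_smul, ContinuousLinearMap.add_apply,
      ContinuousLinearMap.smul_apply, smul_eq_mul]
    ring
  have hud : DifferentiableAt ℝ (fderiv ℝ u) p' := (hu1.differentiable one_ne_zero).differentiableAt
  have hlap : (U2 1) 1 + (U2 I) I = lapSliceR u I p' := by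
    rw [lapSliceR]
    rw [fderiv_clm_apply hud (differentiableAt_const _),
      fderiv_clm_apply hud (differentiableAt_const _)]
    simp [hU2def]
  have hzero : lapSliceR u I p' = 0 := by
    have h := hharm I hI (Fc f z).re (Fc f z).im
    rwa [show ((Fc f z).re : H4) + (Fc f z).im • I = p' from rfl] at h
  rw [← hAdef, ← hBdef]
  rw [show (U2 A) A + (fderiv ℝ u p') (iota I (F2 z))
      + ((U2 B) B + -((fderiv ℝ u p') (iota I (F2 z))))
      = (U2 A) A + (U2 B) B from by ring]
  rw [hexpand, hlap, hzero, mul_zero]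
end
end
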